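/- arXiv:math/0306187 — 6 statements merged into one kernel-verified Lean document; each statement's English description precedes it below -/
import Mathlib

section
/- Let V be a finite-dimensional real vector space with a positive definite inner product, and let L : [t₀-ε, t₀+ε] → Sym(V) be a smooth curve of symmetric linear operators. If u, v : [t₀-ε, t₀+ε] → V are smooth root functions at t₀ (i.e. u(t₀), v(t₀) ∈ Ker(L(t₀))) each of order at least k (the maps t ↦ L(t)u(t) and t ↦ L(t)v(t) vanish to order ≥ k at t₀), then ⟨(d/dt)^k|_{t=t₀}[L(t)u(t)], v(t₀)⟩ = ⟨u(t₀), (d/dt)^k|_{t=t₀}[L(t)v(t)]⟩. Consequently the bilinear form B_k(u₀,v₀) = (1/k!)⟨(d/dt)^k|_{t=t₀}[L(t)u(t)], v₀⟩ on W_k is well defined (independent of the choice of root function) and symmetric. -/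
open scoped RealInnerProductSpace

open scoped ContDiff

private lemma iterDeriv_add' {F : Type*} [NormedAddCommGroup F] [NormedSpace ℝ F]
    {n : ℕ} {f g : ℝ → F} (hf : ContDiff ℝ ∞ f) (hg : ContDiff ℝ ∞ g) (x : ℝ) :
    iteratedDeriv n (fun t => f t + g t) x = iteratedDeriv n f x + iteratedDeriv n g x := by
  simp only [iteratedDeriv_eq_iteratedFDeriv]
  rw [iteratedFDeriv_add_apply' (hf.of_le (by exact_mod_cast le_top)).contDiffAt
    (hg.of_le (by exact_mod_cast le_top)).contDiffAt]
  rfl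

private lemma aux_inner_deriv {E : Type*} [NormedAddCommGroup E] [InnerProductSpace ℝ E]
    (k : ℕ) : ∀ (t₀ : ℝ) (f g : ℝ → E), ContDiff ℝ ∞ f → ContDiff ℝ ∞ g →
    (∀ j < k, iteratedDeriv j f t₀ = 0) →
    iteratedDeriv k (fun t => ⟪f t, g t⟫) t₀ = ⟪iteratedDeriv k f t₀, g t₀⟫ := by
  induction k with
  | zero => intro t₀ f g hf hg h; simp [iteratedDeriv_zero]
  | succ k ih =>
    intro t₀ f g hf hg h
    have hf' : ContDiff ℝ ∞ (deriv f) := (contDiff_infty_iff_deriv.mp hf).2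
    have hg' : ContDiff ℝ ∞ (deriv g) := (contDiff_infty_iff_deriv.mp hg).2
    have hd : deriv (fun t => ⟪f t, g t⟫) =
        fun t => ⟪f t, deriv g t⟫ + ⟪deriv f t, g t⟫ := by
      funext t
      exact (((hf.differentiable (by simp) t).hasDerivAt).inner ℝ
        ((hg.differentiable (by simp) t).hasDerivAt)).deriv
    rw [iteratedDeriv_succ', hd,
      iterDeriv_add' (hf.inner ℝ hg') (hf'.inner ℝ hg),
      ih t₀ f (deriv g) hf hg' (fun j hj => h j (hj.trans (Nat.lt_succ_self k))),
      ih t₀ (deriv f) g hf' hg (by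
        intro j hj
        rw [← iteratedDeriv_succ']
        exact h (j + 1) (Nat.succ_lt_succ hj)),
      h k (Nat.lt_succ_self k), ← iteratedDeriv_succ']
    simp

/-- **Symmetry of the k-th derivative pairing for root functions.**
If `u, v` are smooth root functions of order at least `k` for a smooth curve `L` of
symmetric operators at `t₀`, then
`⟪(d/dt)^k[L(t)u(t)]|_{t₀}, v(t₀)⟫ = ⟪u(t₀), (d/dt)^k[L(t)v(t)]|_{t₀}⟫`.
Consequently the partial signature forms `B_k` are well defined and symmetric. -/
theorem partial_signature_form_symmetric
    {E : Type*} [NormedAddCommGroup E] [InnerProductSpace ℝ E] [FiniteDimensional ℝ E]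
    (L : ℝ → E →L[ℝ] E) (t₀ : ℝ) (k : ℕ)
    (hL : ContDiff ℝ (⊤ : ℕ∞) L)
    (hsym : ∀ t, ∀ x y : E, ⟪L t x, y⟫ = ⟪x, L t y⟫)
    (u v : ℝ → E) (hu : ContDiff ℝ (⊤ : ℕ∞) u) (hv : ContDiff ℝ (⊤ : ℕ∞) v)
    (hu0 : L t₀ (u t₀) = 0) (hv0 : L t₀ (v t₀) = 0)
    (huk : ∀ j < k, iteratedDeriv j (fun t => L t (u t)) t₀ = 0)
    (hvk : ∀ j < k, iteratedDeriv j (fun t => L t (v t)) t₀ = 0) :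
    ⟪iteratedDeriv k (fun t => L t (u t)) t₀, v t₀⟫
      = ⟪u t₀, iteratedDeriv k (fun t => L t (v t)) t₀⟫ := by
  have hLu : ContDiff ℝ ∞ fun t => L t (u t) := (hL.clm_apply hu).of_le (by simp)
  have hLv : ContDiff ℝ ∞ fun t => L t (v t) := (hL.clm_apply hv).of_le (by simp)
  have key : (fun t => ⟪(L t) (u t), v t⟫) = fun t => ⟪(L t) (v t), u t⟫ := by
    funext t; rw [hsym t, real_inner_comm]
  calc ⟪iteratedDeriv k (fun t => L t (u t)) t₀, v t₀⟫
      = iteratedDeriv k (fun t => ⟪L t (u t), v t⟫) t₀ :=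
        (aux_inner_deriv k t₀ _ v hLu (hv.of_le (by simp)) huk).symm
    _ = iteratedDeriv k (fun t => ⟪L t (v t), u t⟫) t₀ := by rw [key]
    _ = ⟪iteratedDeriv k (fun t => L t (v t)) t₀, u t₀⟫ :=
        aux_inner_deriv k t₀ _ u hLv (hu.of_le (by simp)) hvk
    _ = ⟪u t₀, iteratedDeriv k (fun t => L t (v t)) t₀⟫ := real_inner_comm _ _
end

section
/- Let V be a finite-dimensional real vector space with inner product, L : [t₀-ε, t₀+ε] → Sym(V) a smooth curve of symmetric operators with an isolated degeneracy at t₀, and suppose the restriction B₁ of ⟨L'(t₀)·,·⟩ to Ker(L(t₀)) is nondegenerate. Then for all sufficiently small ε > 0: n⁺(L(t₀+ε)) − n⁺(L(t₀)) = n⁺(B₁), n⁺(L(t₀)) − n⁺(L(t₀−ε)) = −n⁻(B₁), and n⁺(L(t₀+ε)) − n⁺(L(t₀−ε)) = σ(B₁). -/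
open scoped RealInnerProductSpace
open Module Submodule
set_option linter.unusedSectionVars false
set_option maxHeartbeats 1000000

/-- The coindex of (the restriction to `W` of) a form `B`: the largest dimension of a
subspace contained in `W` on which `B` is positive definite. -/
noncomputable def posIndexOn {V : Type*} [AddCommGroup V] [Module ℝ V]
    (B : V → V → ℝ) (W : Set V) : ℕ :=
  sSup {n : ℕ | ∃ S : Submodule ℝ V, (S : Set V) ⊆ W ∧ Module.finrank ℝ S = n ∧
    ∀ x ∈ S, x ≠ 0 → 0 < B x x}

/-- The index of (the restriction to `W` of) a form `B`. -/
noncomputable def negIndexOn {V : Type*} [AddCommGroup V] [Module ℝ V]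
    (B : V → V → ℝ) (W : Set V) : ℕ :=
  sSup {n : ℕ | ∃ S : Submodule ℝ V, (S : Set V) ⊆ W ∧ Module.finrank ℝ S = n ∧
    ∀ x ∈ S, x ≠ 0 → B x x < 0}



section AuxJump
variable {F : Type*} [NormedAddCommGroup F] [InnerProductSpace ℝ F] [FiniteDimensional ℝ F]

lemma posSet_bdd (B : F → F → ℝ) (W : Set F) :
    BddAbove {n : ℕ | ∃ S : Submodule ℝ F, (S : Set F) ⊆ W ∧ Module.finrank ℝ S = n ∧
      ∀ x ∈ S, x ≠ 0 → 0 < B x x} :=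
  ⟨finrank ℝ F, fun _ hn => by obtain ⟨S, _, hS, _⟩ := hn; exact hS ▸ S.finrank_le⟩

lemma le_posIndexOn {B : F → F → ℝ} {W : Set F} (S : Submodule ℝ F)
    (h1 : (S : Set F) ⊆ W) (h2 : ∀ x ∈ S, x ≠ 0 → 0 < B x x) :
    finrank ℝ S ≤ posIndexOn B W :=
  le_csSup (posSet_bdd B W) ⟨S, h1, rfl, h2⟩

lemma posIndexOn_spec (B : F → F → ℝ) {W : Set F} (h0 : (0 : F) ∈ W) :
    ∃ S : Submodule ℝ F, (S : Set F) ⊆ W ∧ finrank ℝ S = posIndexOn B W ∧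
      ∀ x ∈ S, x ≠ 0 → 0 < B x x := by
  have hne : {n : ℕ | ∃ S : Submodule ℝ F, (S : Set F) ⊆ W ∧ Module.finrank ℝ S = n ∧
      ∀ x ∈ S, x ≠ 0 → 0 < B x x}.Nonempty := by
    refine ⟨0, ⊥, ?_, ?_, ?_⟩
    · intro x hx
      simp only [SetLike.mem_coe, mem_bot] at hx
      simpa [hx] using h0
    · simp
    · intro x hx hx0
      simp only [mem_bot] at hx
      exact absurd hx hx0
  exact Nat.sSup_mem hne (posSet_bdd B W)

lemma negSet_bdd (B : F → F → ℝ) (W : Set F) :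
    BddAbove {n : ℕ | ∃ S : Submodule ℝ F, (S : Set F) ⊆ W ∧ Module.finrank ℝ S = n ∧
      ∀ x ∈ S, x ≠ 0 → B x x < 0} :=
  ⟨finrank ℝ F, fun _ hn => by obtain ⟨S, _, hS, _⟩ := hn; exact hS ▸ S.finrank_le⟩

lemma le_negIndexOn {B : F → F → ℝ} {W : Set F} (S : Submodule ℝ F)
    (h1 : (S : Set F) ⊆ W) (h2 : ∀ x ∈ S, x ≠ 0 → B x x < 0) :
    finrank ℝ S ≤ negIndexOn B W :=
  le_csSup (negSet_bdd B W) ⟨S, h1, rfl, h2⟩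

lemma negIndexOn_spec (B : F → F → ℝ) {W : Set F} (h0 : (0 : F) ∈ W) :
    ∃ S : Submodule ℝ F, (S : Set F) ⊆ W ∧ finrank ℝ S = negIndexOn B W ∧
      ∀ x ∈ S, x ≠ 0 → B x x < 0 := by
  have hne : {n : ℕ | ∃ S : Submodule ℝ F, (S : Set F) ⊆ W ∧ Module.finrank ℝ S = n ∧
      ∀ x ∈ S, x ≠ 0 → B x x < 0}.Nonempty := by
    refine ⟨0, ⊥, ?_, ?_, ?_⟩
    · intro x hx
      simp only [SetLike.mem_coe, mem_bot] at hx
      simpa [hx] using h0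
    · simp
    · intro x hx hx0
      simp only [mem_bot] at hx
      exact absurd hx hx0
  exact Nat.sSup_mem hne (negSet_bdd B W)

lemma exists_coercivity (T : F →L[ℝ] F) (P : Submodule ℝ F)
    (hP : ∀ x ∈ P, x ≠ 0 → 0 < ⟪T x, x⟫) :
    ∃ c > 0, ∀ x ∈ P, c * ‖x‖ ^ 2 ≤ ⟪T x, x⟫ := by
  by_cases hbot : P = ⊥
  · refine ⟨1, one_pos, fun x hx => ?_⟩
    rw [hbot, mem_bot] at hx
    simp [hx]
  · have : Nontrivial P := Submodule.nontrivial_iff_ne_bot.mpr hbot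
    have hsne : (Metric.sphere (0 : P) 1).Nonempty :=
      NormedSpace.sphere_nonempty.mpr zero_le_one
    have hscpt : IsCompact (Metric.sphere (0 : P) 1) := isCompact_sphere _ _
    have hcont : Continuous fun x : P => ⟪T (x : F), (x : F)⟫ := by
      exact (T.continuous.comp continuous_subtype_val).inner continuous_subtype_val
    obtain ⟨u, hu, hmin⟩ := hscpt.exists_isMinOn hsne hcont.continuousOn
    have hu1 : ‖(u : F)‖ = 1 := by simpa using mem_sphere_zero_iff_norm.mp hu
    have hune : (u : F) ≠ 0 := by
      intro h; rw [h] at hu1; simp at hu1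
    set c : ℝ := ⟪T (u : F), (u : F)⟫ with hc
    have hcpos : 0 < c := hP _ u.2 hune
    refine ⟨c, hcpos, fun x hx => ?_⟩
    rcases eq_or_ne x 0 with rfl | hx0
    · simp
    · have hxn : (0 : ℝ) < ‖x‖ := norm_pos_iff.mpr hx0
      set v : P := (‖x‖)⁻¹ • ⟨x, hx⟩ with hv
      have hvs : v ∈ Metric.sphere (0 : P) 1 := by
        rw [mem_sphere_zero_iff_norm, hv, norm_smul]
        simp [abs_of_pos hxn, inv_mul_cancel₀ hxn.ne']
      have hle : c ≤ ⟪T (v : F), (v : F)⟫ := hmin hvs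
      have hvx : (v : F) = (‖x‖)⁻¹ • x := rfl
      rw [hvx, map_smul, real_inner_smul_left, real_inner_smul_right] at hle
      have h2 : c ≤ (‖x‖)⁻¹ * ((‖x‖)⁻¹ * ⟪T x, x⟫) := hle
      have := mul_le_mul_of_nonneg_left h2 (le_of_lt (by positivity : (0:ℝ) < ‖x‖ ^ 2))
      calc c * ‖x‖ ^ 2 = ‖x‖ ^ 2 * c := by ring
      _ ≤ ‖x‖ ^ 2 * ((‖x‖)⁻¹ * ((‖x‖)⁻¹ * ⟪T x, x⟫)) := this
      _ = ⟪T x, x⟫ := by field_simp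

lemma arith_aux (c c' d ε np nq T1 A B C Dq Rt : ℝ)
    (h1 : c * np ^ 2 ≤ T1)
    (e1 : ε * -(d * np * np) ≤ ε * A)
    (e2 : ε * -(d * np * nq) ≤ ε * B)
    (e3 : ε * -(d * nq * np) ≤ ε * C)
    (e4 : ε * (c' * nq ^ 2) ≤ ε * Dq)
    (hcross4 : -(c' / 8 * ε * (2 * np ^ 2 + 2 * nq ^ 2)) ≤ Rt)
    (hamgm : ε * (2 * d * np * nq) ≤ c / 4 * np ^ 2 + ε ^ 2 * (4 * d ^ 2 / c) * nq ^ 2)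
    (f1 : ε * (d + 2 * (c' / 8)) * np ^ 2 ≤ c / 4 * np ^ 2)
    (f2 : ε * (4 * d ^ 2 / c) * (ε * nq ^ 2) ≤ c' / 4 * (ε * nq ^ 2)) :
    c / 2 * np ^ 2 + ε * c' / 2 * nq ^ 2 ≤ T1 + ε * (A + B + C + Dq) + Rt := by
  linarith

/-- Key perturbation lemma. -/
lemma key_pert (L₀ D : F →L[ℝ] F) (hL₀ : ∀ x y : F, ⟪L₀ x, y⟫ = ⟪x, L₀ y⟫)
    (P Q : Submodule ℝ F) (hQK : Q ≤ LinearMap.ker (L₀ : F →ₗ[ℝ] F))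
    (hP : ∀ x ∈ P, x ≠ 0 → 0 < ⟪L₀ x, x⟫) (hQ : ∀ x ∈ Q, x ≠ 0 → 0 < ⟪D x, x⟫) :
    ∃ ε₀ > 0, ∃ η > 0, ∀ ε : ℝ, 0 < ε → ε < ε₀ → ∀ M : F →L[ℝ] F,
      ‖M - L₀ - ε • D‖ ≤ η * ε → ∀ x ∈ P ⊔ Q, x ≠ 0 → 0 < ⟪M x, x⟫ := by
  obtain ⟨c, hc, hcP⟩ := exists_coercivity L₀ P hP
  obtain ⟨c', hc', hcQ⟩ := exists_coercivity D Q hQ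
  set d : ℝ := ‖D‖ + 1 with hd
  have hdpos : 0 < d := by positivity
  have hdD : ‖D‖ ≤ d := by simp [hd]
  set η : ℝ := c' / 8 with hη
  have hηpos : 0 < η := by positivity
  refine ⟨min (c / (4 * (d + 2 * η))) (c * c' / (16 * d ^ 2)), by positivity, η, hηpos,
    fun ε hε hε₀ M hM x hx hx0 => ?_⟩
  obtain ⟨p, hp, q, hq, rfl⟩ := Submodule.mem_sup.mp hx
  have hqker : L₀ q = 0 := hQK hq
  -- decompose the quadratic form
  set R : F →L[ℝ] F := M - L₀ - ε • D with hR
  have hMx : ∀ z : F, ⟪M z, z⟫ = ⟪L₀ z, z⟫ + ε * ⟪D z, z⟫ + ⟪R z, z⟫ := by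
    intro z
    have : M z = L₀ z + ε • D z + R z := by simp [hR]
    rw [this, inner_add_left, inner_add_left, real_inner_smul_left]
  -- the L₀ part
  have hL0part : ⟪L₀ (p + q), p + q⟫ = ⟪L₀ p, p⟫ := by
    rw [map_add, inner_add_left, inner_add_right, inner_add_right, hqker]
    rw [hL₀ p q, hqker]
    simp
  -- bounds
  have h1 : c * ‖p‖ ^ 2 ≤ ⟪L₀ p, p⟫ := hcP p hp
  have h2 : c' * ‖q‖ ^ 2 ≤ ⟪D q, q⟫ := hcQ q hq
  have habs : ∀ u v : F, |⟪D u, v⟫| ≤ d * ‖u‖ * ‖v‖ := by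
    intro u v
    calc |⟪D u, v⟫| ≤ ‖D u‖ * ‖v‖ := abs_real_inner_le_norm _ _
    _ ≤ (‖D‖ * ‖u‖) * ‖v‖ := by
        have := D.le_opNorm u
        exact mul_le_mul_of_nonneg_right this (norm_nonneg v)
    _ ≤ d * ‖u‖ * ‖v‖ := by
        have := mul_le_mul_of_nonneg_right hdD (norm_nonneg u)
        exact mul_le_mul_of_nonneg_right this (norm_nonneg v)
  have hDexp : ⟪D (p + q), p + q⟫ = ⟪D p, p⟫ + ⟪D p, q⟫ + ⟪D q, p⟫ + ⟪D q, q⟫ := by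
    rw [map_add, inner_add_left, inner_add_right, inner_add_right]; ring
  have hRbound : |⟪R (p + q), p + q⟫| ≤ η * ε * (2 * ‖p‖ ^ 2 + 2 * ‖q‖ ^ 2) := by
    have h3 : |⟪R (p + q), p + q⟫| ≤ ‖R (p+q)‖ * ‖p + q‖ := abs_real_inner_le_norm _ _
    have h4 : ‖R (p+q)‖ ≤ ‖R‖ * ‖p + q‖ := R.le_opNorm _
    have h5 : ‖p + q‖ ≤ ‖p‖ + ‖q‖ := norm_add_le _ _
    have h6 : ‖R‖ ≤ η * ε := hM
    have h7 : |⟪R (p + q), p + q⟫| ≤ (η * ε) * (‖p‖ + ‖q‖) ^ 2 := by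
      calc |⟪R (p + q), p + q⟫| ≤ ‖R (p+q)‖ * ‖p + q‖ := h3
      _ ≤ (‖R‖ * ‖p + q‖) * ‖p + q‖ := mul_le_mul_of_nonneg_right h4 (norm_nonneg _)
      _ = ‖R‖ * ‖p + q‖ ^ 2 := by ring
      _ ≤ (η * ε) * (‖p‖ + ‖q‖) ^ 2 := by
          apply mul_le_mul h6 _ (by positivity) (by positivity)
          exact pow_le_pow_left₀ (norm_nonneg _) h5 2
    calc |⟪R (p + q), p + q⟫| ≤ (η * ε) * (‖p‖ + ‖q‖) ^ 2 := h7
    _ ≤ η * ε * (2 * ‖p‖ ^ 2 + 2 * ‖q‖ ^ 2) := by nlinarith [sq_nonneg (‖p‖ - ‖q‖), mul_pos hηpos hε]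
  -- smallness of ε
  have hεa : ε * (d + 2 * η) ≤ c / 4 := by
    have hεle : ε ≤ c / (4 * (d + 2 * η)) := le_of_lt (lt_of_lt_of_le hε₀ (min_le_left _ _))
    calc ε * (d + 2 * η) ≤ (c / (4 * (d + 2 * η))) * (d + 2 * η) :=
          mul_le_mul_of_nonneg_right hεle (by positivity)
    _ = c / 4 := by field_simp
  have hεb : ε * (4 * d ^ 2 / c) ≤ c' / 4 := by
    have hεle : ε ≤ c * c' / (16 * d ^ 2) := le_of_lt (lt_of_lt_of_le hε₀ (min_le_right _ _))
    calc ε * (4 * d ^ 2 / c) ≤ (c * c' / (16 * d ^ 2)) * (4 * d ^ 2 / c) := by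
          apply mul_le_mul_of_nonneg_right hεle (by positivity)
    _ = c' / 4 := by field_simp; ring
  -- put it together
  have hpq : ‖p‖ ≠ 0 ∨ ‖q‖ ≠ 0 := by
    by_contra h
    push_neg at h
    obtain ⟨h1', h2'⟩ := h
    apply hx0
    rw [norm_eq_zero.mp h1', norm_eq_zero.mp h2', add_zero]
  have key : (c / 2) * ‖p‖ ^ 2 + (ε * c' / 2) * ‖q‖ ^ 2 ≤ ⟪M (p + q), p + q⟫ := by
    rw [hMx, hL0part, hDexp]
    have hcross1 := (abs_le.mp (habs p p)).1
    have hcross2 := (abs_le.mp (habs p q)).1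
    have hcross3 := (abs_le.mp (habs q p)).1
    have hcross4 := (abs_le.mp hRbound).1
    -- AM-GM for the mixed terms : 2*ε*d*‖p‖*‖q‖ ≤ (c/4)‖p‖² + (4ε²d²/c)‖q‖²
    have hamgm : ε * (2 * d * ‖p‖ * ‖q‖) ≤ (c / 4) * ‖p‖ ^ 2 + (ε ^ 2 * (4 * d ^ 2 / c)) * ‖q‖ ^ 2 := by
      rw [← mul_le_mul_iff_right₀ hc]
      have hexp : c * ((c / 4) * ‖p‖ ^ 2 + (ε ^ 2 * (4 * d ^ 2 / c)) * ‖q‖ ^ 2)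
          = (c ^ 2 / 4) * ‖p‖ ^ 2 + 4 * ε ^ 2 * d ^ 2 * ‖q‖ ^ 2 := by field_simp
      rw [hexp]
      nlinarith [sq_nonneg (c / 2 * ‖p‖ - 2 * ε * d * ‖q‖)]
    have e1 := mul_le_mul_of_nonneg_left hcross1 (le_of_lt hε)
    have e2 := mul_le_mul_of_nonneg_left hcross2 (le_of_lt hε)
    have e3 := mul_le_mul_of_nonneg_left hcross3 (le_of_lt hε)
    have e4 := mul_le_mul_of_nonneg_left h2 (le_of_lt hε)
    have f1 := mul_le_mul_of_nonneg_right hεa (sq_nonneg ‖p‖)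
    have f2 := mul_le_mul_of_nonneg_right hεb
      (mul_nonneg (le_of_lt hε) (sq_nonneg ‖q‖))
    rw [hη] at hcross4 f1
    exact arith_aux c c' d ε ‖p‖ ‖q‖ _ _ _ _ _ _ h1 e1 e2 e3 e4 hcross4 hamgm f1 f2
  have hpos : 0 < (c / 2) * ‖p‖ ^ 2 + (ε * c' / 2) * ‖q‖ ^ 2 := by
    rcases hpq with h | h
    · have hp0 : 0 < ‖p‖ := lt_of_le_of_ne (norm_nonneg p) (Ne.symm h)
      have h4 : 0 ≤ (ε * c' / 2) * ‖q‖ ^ 2 := by positivity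
      have h3 := mul_pos (show (0:ℝ) < c / 2 by positivity) (pow_pos hp0 2)
      linarith
    · have hq0 : 0 < ‖q‖ := lt_of_le_of_ne (norm_nonneg q) (Ne.symm h)
      have h4 : 0 ≤ (c / 2) * ‖p‖ ^ 2 := by positivity
      have h3 := mul_pos (show (0:ℝ) < ε * c' / 2 by positivity) (pow_pos hq0 2)
      linarith
  linarith

lemma finrank_span_ob {n : ℕ} (b : OrthonormalBasis (Fin n) ℝ F) (s : Finset (Fin n)) :
    finrank ℝ (span ℝ (⇑b '' ↑s)) = s.card := by
  have hli : LinearIndependent ℝ (fun i : {x // x ∈ s} => b i) :=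
    b.toBasis.linearIndependent.comp _ Subtype.val_injective
  have hr : Set.range (fun i : {x // x ∈ s} => b i) = ⇑b '' ↑s := by
    ext x; simp [Set.mem_image]
  rw [← hr, finrank_span_eq_card hli, Fintype.card_coe]

lemma mem_span_ob_iff {n : ℕ} (b : OrthonormalBasis (Fin n) ℝ F) (s : Finset (Fin n)) (x : F) :
    x ∈ span ℝ (⇑b '' ↑s) ↔ ∀ i, b.repr x i ≠ 0 → i ∈ s := by
  have h1 : (⇑b '' ↑s) = (⇑b.toBasis '' ↑s) := by rw [b.coe_toBasis]
  rw [h1, Basis.mem_span_image]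
  constructor
  · intro h i hi
    have : i ∈ (b.toBasis.repr x).support := by
      rw [Finsupp.mem_support_iff, b.coe_toBasis_repr_apply]
      exact hi
    exact h this
  · intro h i hi
    rw [Finset.mem_coe, Finsupp.mem_support_iff, b.coe_toBasis_repr_apply] at hi
    exact h i hi

lemma inner_eq_sum_repr {n : ℕ} (b : OrthonormalBasis (Fin n) ℝ F) (x y : F) :
    ⟪x, y⟫ = ∑ i, b.repr x i * b.repr y i := by
  rw [← b.sum_inner_mul_inner x y]
  exact Finset.sum_congr rfl fun i _ => by
    rw [b.repr_apply_apply, b.repr_apply_apply, real_inner_comm]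

/-- Spectral decomposition into maximal positive/negative subspaces. -/
lemma inertia_ge (T : F →L[ℝ] F) (hT : ∀ x y : F, ⟪T x, y⟫ = ⟪x, T y⟫) :
    ∃ P N : Submodule ℝ F,
      (∀ x ∈ P, x ≠ 0 → 0 < ⟪T x, x⟫) ∧ (∀ x ∈ N, x ≠ 0 → ⟪T x, x⟫ < 0) ∧
      finrank ℝ P + finrank ℝ N + finrank ℝ (LinearMap.ker (T : F →ₗ[ℝ] F)) = finrank ℝ F := by
  classical
  have hTs : (T : F →ₗ[ℝ] F).IsSymmetric := fun x y => hT x y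
  set n := finrank ℝ F with hn
  set b := hTs.eigenvectorBasis rfl with hb
  set μ := hTs.eigenvalues (n := n) rfl with hμ
  have happly : ∀ (x : F) (i : Fin n), b.repr (T x) i = μ i * b.repr x i := fun x i =>
    hTs.eigenvectorBasis_apply_self_apply rfl x i
  have hform : ∀ x : F, ⟪T x, x⟫ = ∑ i, μ i * b.repr x i ^ 2 := by
    intro x
    rw [inner_eq_sum_repr b (T x) x]
    refine Finset.sum_congr rfl fun i _ => ?_
    rw [happly]; ring
  set sp : Finset (Fin n) := Finset.univ.filter (fun i => 0 < μ i) with hsp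
  set sn : Finset (Fin n) := Finset.univ.filter (fun i => μ i < 0) with hsn
  set s0 : Finset (Fin n) := Finset.univ.filter (fun i => μ i = 0) with hs0
  refine ⟨span ℝ (⇑b '' ↑sp), span ℝ (⇑b '' ↑sn), ?_, ?_, ?_⟩
  · intro x hx hx0
    rw [hform]
    rw [mem_span_ob_iff] at hx
    have hterm : ∀ i ∈ Finset.univ, 0 ≤ μ i * b.repr x i ^ 2 := by
      intro i _
      rcases eq_or_ne (b.repr x i) 0 with h | h
      · simp [h]
      · have := hx i h
        rw [hsp, Finset.mem_filter] at this
        have := this.2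
        positivity
    have hex : ∃ i ∈ Finset.univ, 0 < μ i * b.repr x i ^ 2 := by
      have : b.repr x ≠ 0 := fun h => hx0 (by simpa using congrArg b.repr.symm h)
      obtain ⟨i, hi⟩ : ∃ i, b.repr x i ≠ 0 := by
        by_contra hc; push_neg at hc; exact this (by ext j; simpa using hc j)
      have hi' : b.repr x i ≠ 0 := by simpa using hi
      have hμi : 0 < μ i := by
        have := hx i hi'
        rw [hsp, Finset.mem_filter] at this
        exact this.2
      exact ⟨i, Finset.mem_univ i, by positivity⟩
    obtain ⟨i, _, hi⟩ := hex
    exact Finset.sum_pos' hterm ⟨i, Finset.mem_univ i, hi⟩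
  · intro x hx hx0
    rw [hform]
    rw [mem_span_ob_iff] at hx
    have hterm : ∀ i ∈ Finset.univ, μ i * b.repr x i ^ 2 ≤ 0 := by
      intro i _
      rcases eq_or_ne (b.repr x i) 0 with h | h
      · simp [h]
      · have := hx i h
        rw [hsn, Finset.mem_filter] at this
        have h2 := this.2
        have h3 : 0 < b.repr x i ^ 2 := by positivity
        nlinarith
    have hex : ∃ i ∈ Finset.univ, μ i * b.repr x i ^ 2 < 0 := by
      have : b.repr x ≠ 0 := fun h => hx0 (by simpa using congrArg b.repr.symm h)
      obtain ⟨i, hi⟩ : ∃ i, b.repr x i ≠ 0 := by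
        by_contra hc; push_neg at hc; exact this (by ext j; simpa using hc j)
      have hi' : b.repr x i ≠ 0 := by simpa using hi
      have hμi : μ i < 0 := by
        have := hx i hi'
        rw [hsn, Finset.mem_filter] at this
        exact this.2
      have h3 : 0 < b.repr x i ^ 2 := by positivity
      exact ⟨i, Finset.mem_univ i, by nlinarith⟩
    obtain ⟨i, _, hi⟩ := hex
    calc ∑ i, μ i * b.repr x i ^ 2
        = μ i * b.repr x i ^ 2 + ∑ j ∈ Finset.univ.erase i, μ j * b.repr x j ^ 2 :=
          (Finset.add_sum_erase Finset.univ (fun j => μ j * b.repr x j ^ 2)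
            (Finset.mem_univ i)).symm
    _ < 0 := by
        have h4 : ∑ j ∈ Finset.univ.erase i, μ j * b.repr x j ^ 2 ≤ 0 :=
          Finset.sum_nonpos fun j hj => hterm j (Finset.mem_univ j)
        linarith
  · -- kernel is the span of the null eigenvectors
    have hker : LinearMap.ker (T : F →ₗ[ℝ] F) = span ℝ (⇑b '' ↑s0) := by
      ext x
      rw [LinearMap.mem_ker, mem_span_ob_iff]
      constructor
      · intro hTx i hxi
        rw [hs0, Finset.mem_filter]
        refine ⟨Finset.mem_univ i, ?_⟩
        have h0 : b.repr (T x) i = 0 := by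
          change b.repr ((T : F →ₗ[ℝ] F) x) i = 0
          rw [show (T : F →ₗ[ℝ] F) x = 0 from hTx]
          simp
        rw [happly] at h0
        rcases mul_eq_zero.mp h0 with h | h
        · exact h
        · exact absurd h hxi
      · intro h
        have : ∀ i, b.repr (T x) i = 0 := by
          intro i
          rw [happly]
          rcases eq_or_ne (b.repr x i) 0 with h2 | h2
          · simp [h2]
          · have := h i h2
            rw [hs0, Finset.mem_filter] at this
            simp [this.2]
        have hrepr0 : b.repr (T x) = 0 := by
          ext i; simpa using this i
        have := congrArg b.repr.symm hrepr0
        simpa using this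
    rw [hker, finrank_span_ob, finrank_span_ob, finrank_span_ob]
    have d1 : Disjoint sp sn := Finset.disjoint_left.mpr (by
      intro i hi hi'
      rw [hsp, Finset.mem_filter] at hi
      rw [hsn, Finset.mem_filter] at hi'
      linarith [hi.2, hi'.2])
    have d2 : Disjoint (sp ∪ sn) s0 := Finset.disjoint_left.mpr (by
      intro i hi hi'
      rw [hs0, Finset.mem_filter] at hi'
      rcases Finset.mem_union.mp hi with h | h
      · rw [hsp, Finset.mem_filter] at h
        linarith [h.2, hi'.2]
      · rw [hsn, Finset.mem_filter] at h
        linarith [h.2, hi'.2])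
    have hu : sp ∪ sn ∪ s0 = Finset.univ := by
      ext i
      simp only [Finset.mem_union, Finset.mem_univ, iff_true]
      rcases lt_trichotomy (μ i) 0 with h | h | h
      · left; right; simp [hsn, h]
      · right; simp [hs0, h]
      · left; left; simp [hsp, h]
    have hcards := Finset.card_union_of_disjoint d2
    rw [hu, Finset.card_union_of_disjoint d1, Finset.card_univ, Fintype.card_fin] at hcards
    omega

lemma inertia_le (T : F →L[ℝ] F) (hT : ∀ x y : F, ⟪T x, y⟫ = ⟪x, T y⟫)
    (P N : Submodule ℝ F)
    (hP : ∀ x ∈ P, x ≠ 0 → 0 < ⟪T x, x⟫) (hN : ∀ x ∈ N, x ≠ 0 → ⟪T x, x⟫ < 0) :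
    finrank ℝ P + finrank ℝ N + finrank ℝ (LinearMap.ker (T : F →ₗ[ℝ] F)) ≤ finrank ℝ F := by
  set K := LinearMap.ker (T : F →ₗ[ℝ] F) with hK
  have hdisj2 : N ⊓ K = ⊥ := by
    rw [eq_bot_iff]
    intro x hx
    rw [mem_bot]
    by_contra hx0
    have h1 := hN x hx.1 hx0
    have h2 : T x = 0 := hx.2
    rw [show ⟪T x, x⟫ = 0 by rw [h2]; simp] at h1
    exact lt_irrefl 0 h1
  have hdisj1 : P ⊓ (N ⊔ K) = ⊥ := by
    rw [eq_bot_iff]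
    intro x hx
    rw [mem_bot]
    by_contra hx0
    have h1 := hP x hx.1 hx0
    obtain ⟨y, hy, z, hz, rfl⟩ := Submodule.mem_sup.mp hx.2
    have hz0 : T z = 0 := hz
    have hform : ⟪T (y + z), y + z⟫ = ⟪T y, y⟫ := by
      rw [map_add, inner_add_left, inner_add_right, inner_add_right, hz0]
      rw [hT y z, hz0]
      simp
    rw [hform] at h1
    rcases eq_or_ne y 0 with rfl | hy0
    · rw [show ⟪T (0:F), (0:F)⟫ = 0 by simp] at h1
      exact lt_irrefl 0 h1
    · exact absurd h1 (not_lt.mpr (le_of_lt (hN y hy hy0)))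
  have e1 : finrank ℝ P + finrank ℝ (N ⊔ K : Submodule ℝ F) =
      finrank ℝ (P ⊔ (N ⊔ K) : Submodule ℝ F) := by
    have := Submodule.finrank_sup_add_finrank_inf_eq P (N ⊔ K)
    rw [hdisj1] at this
    simpa using this.symm
  have e2 : finrank ℝ N + finrank ℝ K = finrank ℝ (N ⊔ K : Submodule ℝ F) := by
    have := Submodule.finrank_sup_add_finrank_inf_eq N K
    rw [hdisj2] at this
    simpa using this.symm
  calc finrank ℝ P + finrank ℝ N + finrank ℝ K
      = finrank ℝ P + finrank ℝ (N ⊔ K : Submodule ℝ F) := by rw [← e2]; ring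
  _ = finrank ℝ (P ⊔ (N ⊔ K) : Submodule ℝ F) := e1
  _ ≤ finrank ℝ F := Submodule.finrank_le _

lemma inertia_eq (T : F →L[ℝ] F) (hT : ∀ x y : F, ⟪T x, y⟫ = ⟪x, T y⟫) :
    posIndexOn (fun x y => ⟪T x, y⟫) Set.univ + negIndexOn (fun x y => ⟪T x, y⟫) Set.univ
      + finrank ℝ (LinearMap.ker (T : F →ₗ[ℝ] F)) = finrank ℝ F := by
  obtain ⟨P, N, hP, hN, hsum⟩ := inertia_ge T hT
  obtain ⟨S₁, _, hS₁, hS₁pos⟩ := posIndexOn_spec (fun x y => ⟪T x, y⟫) (Set.mem_univ (0 : F))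
  obtain ⟨S₂, _, hS₂, hS₂neg⟩ := negIndexOn_spec (fun x y => ⟪T x, y⟫) (Set.mem_univ (0 : F))
  have hge1 : finrank ℝ P ≤ posIndexOn (fun x y => ⟪T x, y⟫) Set.univ :=
    le_posIndexOn P (by simp) hP
  have hge2 : finrank ℝ N ≤ negIndexOn (fun x y => ⟪T x, y⟫) Set.univ :=
    le_negIndexOn N (by simp) hN
  have hle := inertia_le T hT S₁ S₂ hS₁pos hS₂neg
  omega

/-- Transfer of `posIndexOn` along a subspace inclusion. -/
lemma posIndexOn_restrict (B : F → F → ℝ) (K : Submodule ℝ F) :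
    posIndexOn B (K : Set F) = posIndexOn (fun x y : K => B (x : F) (y : F)) Set.univ := by
  unfold posIndexOn
  congr 1
  ext m
  constructor
  · rintro ⟨S, hSK, hfin, hpos⟩
    have hle : S ≤ K := fun x hx => hSK hx
    refine ⟨S.comap K.subtype, by simp, ?_, ?_⟩
    · rw [← hfin]
      exact (Submodule.comapSubtypeEquivOfLe hle).finrank_eq
    · rintro x hx hx0
      have hxS : (x : F) ∈ S := hx
      have hx0' : (x : F) ≠ 0 := fun h => hx0 (Subtype.ext h)
      exact hpos _ hxS hx0'
  · rintro ⟨S', _, hfin, hpos⟩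
    refine ⟨S'.map K.subtype, ?_, ?_, ?_⟩
    · rintro x hx
      obtain ⟨y, hy, rfl⟩ := Submodule.mem_map.mp hx
      exact y.2
    · rw [← hfin, Submodule.finrank_map_subtype_eq]
    · rintro x hx hx0
      obtain ⟨y, hy, rfl⟩ := Submodule.mem_map.mp hx
      exact hpos y hy (fun h => hx0 (by rw [h]; rfl))

lemma negIndexOn_restrict (B : F → F → ℝ) (K : Submodule ℝ F) :
    negIndexOn B (K : Set F) = negIndexOn (fun x y : K => B (x : F) (y : F)) Set.univ := by
  unfold negIndexOn
  congr 1
  ext m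
  constructor
  · rintro ⟨S, hSK, hfin, hpos⟩
    have hle : S ≤ K := fun x hx => hSK hx
    refine ⟨S.comap K.subtype, by simp, ?_, ?_⟩
    · rw [← hfin]
      exact (Submodule.comapSubtypeEquivOfLe hle).finrank_eq
    · rintro x hx hx0
      have hxS : (x : F) ∈ S := hx
      have hx0' : (x : F) ≠ 0 := fun h => hx0 (Subtype.ext h)
      exact hpos _ hxS hx0'
  · rintro ⟨S', _, hfin, hpos⟩
    refine ⟨S'.map K.subtype, ?_, ?_, ?_⟩
    · rintro x hx
      obtain ⟨y, hy, rfl⟩ := Submodule.mem_map.mp hx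
      exact y.2
    · rw [← hfin, Submodule.finrank_map_subtype_eq]
    · rintro x hx hx0
      obtain ⟨y, hy, rfl⟩ := Submodule.mem_map.mp hx
      exact hpos y hy (fun h => hx0 (by rw [h]; rfl))

/-- Inertia identity for the restricted form on a subspace, under nondegeneracy. -/
lemma inertia_restrict (D : F →L[ℝ] F) (hD : ∀ x y : F, ⟪D x, y⟫ = ⟪x, D y⟫)
    (K : Submodule ℝ F)
    (hnd : ∀ x ∈ K, (∀ y ∈ K, ⟪D x, y⟫ = 0) → x = 0) :
    posIndexOn (fun x y => ⟪D x, y⟫) (K : Set F)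
      + negIndexOn (fun x y => ⟪D x, y⟫) (K : Set F) = finrank ℝ K := by
  have hSD : ∀ x y : K, ⟪((orthogonalProjection K).comp (D.comp K.subtypeL)) x, y⟫
      = ⟪D (x : F), (y : F)⟫ := fun x y =>
    inner_orthogonalProjection_eq_of_mem_right (K := K) (u := y) (D (x : F))
  set S : K →L[ℝ] K := (orthogonalProjection K).comp (D.comp K.subtypeL) with hS
  have hSsym : ∀ x y : K, ⟪S x, y⟫ = ⟪x, S y⟫ := by
    intro x y
    calc ⟪S x, y⟫ = ⟪D (x : F), (y : F)⟫ := hSD x y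
    _ = ⟪(x : F), D (y : F)⟫ := hD _ _
    _ = ⟪D (y : F), (x : F)⟫ := real_inner_comm _ _
    _ = ⟪S y, x⟫ := (hSD y x).symm
    _ = ⟪x, S y⟫ := real_inner_comm _ _
  have hker : LinearMap.ker (S : K →ₗ[ℝ] K) = ⊥ := by
    rw [LinearMap.ker_eq_bot']
    intro x hx
    have h0 : ∀ y ∈ K, ⟪D (x : F), y⟫ = 0 := by
      intro y hy
      have := hSD x ⟨y, hy⟩
      rw [show S x = 0 from hx] at this
      rw [← this]
      simp
    exact Subtype.ext (hnd (x : F) x.2 h0)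
  have := inertia_eq S hSsym
  rw [hker] at this
  simp only [finrank_bot, add_zero] at this
  rw [posIndexOn_restrict _ K, negIndexOn_restrict _ K]
  have hfp : (fun x y : K => ⟪D (x : F), (y : F)⟫) = fun x y : K => ⟪S x, y⟫ := by
    funext x y
    rw [hSD]
  rw [hfp]
  exact this

lemma disj_posdef_ker (T : F →L[ℝ] F) (P Q : Submodule ℝ F)
    (hP : ∀ x ∈ P, x ≠ 0 → 0 < ⟪T x, x⟫) (hQ : Q ≤ LinearMap.ker (T : F →ₗ[ℝ] F)) :
    P ⊓ Q = ⊥ := by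
  rw [eq_bot_iff]
  intro x hx
  rw [mem_bot]
  by_contra hx0
  have h1 := hP x hx.1 hx0
  have h2 : T x = 0 := hQ hx.2
  rw [show ⟪T x, x⟫ = 0 by rw [h2]; simp] at h1
  exact lt_irrefl 0 h1

lemma finrank_sup_disj (P Q : Submodule ℝ F) (h : P ⊓ Q = ⊥) :
    finrank ℝ (P ⊔ Q : Submodule ℝ F) = finrank ℝ P + finrank ℝ Q := by
  have := Submodule.finrank_sup_add_finrank_inf_eq P Q
  rw [h] at this
  simpa using this

lemma neg_symm (T : F →L[ℝ] F) (hT : ∀ x y : F, ⟪T x, y⟫ = ⟪x, T y⟫) :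
    ∀ x y : F, ⟪(-T) x, y⟫ = ⟪x, (-T) y⟫ := by
  intro x y
  simp only [ContinuousLinearMap.neg_apply, inner_neg_left, inner_neg_right]
  rw [hT]

lemma ker_neg (T : F →L[ℝ] F) : LinearMap.ker ((-T : F →L[ℝ] F) : F →ₗ[ℝ] F) = LinearMap.ker (T : F →ₗ[ℝ] F) := by
  ext x
  simp [LinearMap.mem_ker]

end AuxJump

section DerivJump
variable {E : Type*} [NormedAddCommGroup E] [InnerProductSpace ℝ E] [FiniteDimensional ℝ E]

lemma deriv_symmetric (L : ℝ → E →L[ℝ] E) (t₀ : ℝ) (hL : ContDiff ℝ (⊤ : ℕ∞) L)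
    (hsym : ∀ t, ∀ x y : E, ⟪L t x, y⟫ = ⟪x, L t y⟫) :
    ∀ x y : E, ⟪deriv L t₀ x, y⟫ = ⟪x, deriv L t₀ y⟫ := by
  intro x y
  have hd : HasDerivAt L (deriv L t₀) t₀ := (hL.differentiable (by simp) t₀).hasDerivAt
  have h1 : HasDerivAt (fun t => L t x) (deriv L t₀ x) t₀ := by
    have := hd.clm_apply (hasDerivAt_const t₀ x)
    simpa using this
  have h2 : HasDerivAt (fun t => L t y) (deriv L t₀ y) t₀ := by
    have := hd.clm_apply (hasDerivAt_const t₀ y)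
    simpa using this
  have hA : HasDerivAt (fun t => ⟪L t x, y⟫) ⟪deriv L t₀ x, y⟫ t₀ := by
    have := h1.inner ℝ (hasDerivAt_const t₀ y)
    simpa using this
  have hB : HasDerivAt (fun t => ⟪L t x, y⟫) ⟪x, deriv L t₀ y⟫ t₀ := by
    have := (hasDerivAt_const t₀ x).inner ℝ h2
    have h3 : (fun t => ⟪x, L t y⟫) = fun t => ⟪L t x, y⟫ := by
      funext t
      rw [hsym t x y]
    rw [h3] at this
    simpa using this
  exact hA.unique hB

lemma littleO_bound (L : ℝ → E →L[ℝ] E) (t₀ : ℝ) (hL : ContDiff ℝ (⊤ : ℕ∞) L)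
    {η : ℝ} (hη : 0 < η) :
    ∃ δ > 0, ∀ t : ℝ, |t - t₀| < δ →
      ‖L t - L t₀ - (t - t₀) • deriv L t₀‖ ≤ η * |t - t₀| := by
  have hd : HasDerivAt L (deriv L t₀) t₀ := (hL.differentiable (by simp) t₀).hasDerivAt
  have ho := hasDerivAt_iff_isLittleO.mp hd
  have hev := ho.def hη
  rw [Metric.eventually_nhds_iff] at hev
  obtain ⟨δ, hδ, hb⟩ := hev
  refine ⟨δ, hδ, fun t ht => ?_⟩
  have := hb (show dist t t₀ < δ by rwa [Real.dist_eq])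
  simpa [Real.norm_eq_abs] using this

end DerivJump

/-- **Jump of the coindex at a nondegenerate degeneracy instant.**
If the restriction `B₁` of `⟪L'(t₀)·,·⟫` to `Ker L(t₀)` is nondegenerate, then for all
sufficiently small `ε > 0`:
`n⁺(L(t₀+ε)) − n⁺(L(t₀)) = n⁺(B₁)`, `n⁺(L(t₀)) − n⁺(L(t₀−ε)) = −n⁻(B₁)`, and
`n⁺(L(t₀+ε)) − n⁺(L(t₀−ε)) = σ(B₁)`. -/
theorem coindex_jump_of_nondegenerate_first_derivative
    {E : Type*} [NormedAddCommGroup E] [InnerProductSpace ℝ E] [FiniteDimensional ℝ E]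
    (L : ℝ → E →L[ℝ] E) (t₀ : ℝ)
    (hL : ContDiff ℝ (⊤ : ℕ∞) L)
    (hsym : ∀ t, ∀ x y : E, ⟪L t x, y⟫ = ⟪x, L t y⟫)
    (hisol : ∃ δ > 0, ∀ t, t ≠ t₀ → |t - t₀| < δ → Function.Injective ⇑(L t))
    (hnd : ∀ x ∈ LinearMap.ker (L t₀ : E →ₗ[ℝ] E),
      (∀ y ∈ LinearMap.ker (L t₀ : E →ₗ[ℝ] E), ⟪deriv L t₀ x, y⟫ = 0) → x = 0) :
    ∃ ε₀ > 0, ∀ ε : ℝ, 0 < ε → ε < ε₀ →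
      ((posIndexOn (fun x y => ⟪L (t₀ + ε) x, y⟫) Set.univ : ℤ)
          - (posIndexOn (fun x y => ⟪L t₀ x, y⟫) Set.univ : ℤ)
        = (posIndexOn (fun x y => ⟪deriv L t₀ x, y⟫) (LinearMap.ker (L t₀ : E →ₗ[ℝ] E)) : ℤ)) ∧
      ((posIndexOn (fun x y => ⟪L t₀ x, y⟫) Set.univ : ℤ)
          - (posIndexOn (fun x y => ⟪L (t₀ - ε) x, y⟫) Set.univ : ℤ)
        = -(negIndexOn (fun x y => ⟪deriv L t₀ x, y⟫) (LinearMap.ker (L t₀ : E →ₗ[ℝ] E)) : ℤ)) ∧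
      ((posIndexOn (fun x y => ⟪L (t₀ + ε) x, y⟫) Set.univ : ℤ)
          - (posIndexOn (fun x y => ⟪L (t₀ - ε) x, y⟫) Set.univ : ℤ)
        = (posIndexOn (fun x y => ⟪deriv L t₀ x, y⟫) (LinearMap.ker (L t₀ : E →ₗ[ℝ] E)) : ℤ)
          - (negIndexOn (fun x y => ⟪deriv L t₀ x, y⟫) (LinearMap.ker (L t₀ : E →ₗ[ℝ] E)) : ℤ)) := by
  classical
  obtain ⟨δ, hδ, hinj⟩ := hisol
  set L₀ : E →L[ℝ] E := L t₀ with hL₀def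
  set D : E →L[ℝ] E := deriv L t₀ with hDdef
  set K : Submodule ℝ E := LinearMap.ker (L₀ : E →ₗ[ℝ] E) with hKdef
  have hL₀sym : ∀ x y : E, ⟪L₀ x, y⟫ = ⟪x, L₀ y⟫ := hsym t₀
  have hDsym : ∀ x y : E, ⟪D x, y⟫ = ⟪x, D y⟫ := deriv_symmetric L t₀ hL hsym
  have h0K : (0 : E) ∈ (K : Set E) := K.zero_mem
  -- the four maximal subspaces
  obtain ⟨Pp, _, hPpfin, hPppos⟩ :=
    posIndexOn_spec (fun x y : E => ⟪L₀ x, y⟫) (Set.mem_univ (0 : E))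
  obtain ⟨Pn, _, hPnfin, hPnneg⟩ :=
    negIndexOn_spec (fun x y : E => ⟪L₀ x, y⟫) (Set.mem_univ (0 : E))
  obtain ⟨Qp, hQpK, hQpfin, hQppos⟩ := posIndexOn_spec (fun x y : E => ⟪D x, y⟫) h0K
  obtain ⟨Qn, hQnK, hQnfin, hQnneg⟩ := negIndexOn_spec (fun x y : E => ⟪D x, y⟫) h0K
  have hQpK' : Qp ≤ K := fun x hx => hQpK hx
  have hQnK' : Qn ≤ K := fun x hx => hQnK hx
  -- positive definiteness data for negated operators
  have hPnpos : ∀ x ∈ Pn, x ≠ 0 → 0 < ⟪(-L₀) x, x⟫ := by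
    intro x hx hx0
    have := hPnneg x hx hx0
    simp only [ContinuousLinearMap.neg_apply, inner_neg_left]
    linarith
  have hQnpos : ∀ x ∈ Qn, x ≠ 0 → 0 < ⟪(-D) x, x⟫ := by
    intro x hx hx0
    have := hQnneg x hx hx0
    simp only [ContinuousLinearMap.neg_apply, inner_neg_left]
    linarith
  have hQpnegker : Qp ≤ LinearMap.ker ((-L₀ : E →L[ℝ] E) : E →ₗ[ℝ] E) := by rw [ker_neg]; exact hQpK'
  have hQnnegker : Qn ≤ LinearMap.ker ((-L₀ : E →L[ℝ] E) : E →ₗ[ℝ] E) := by rw [ker_neg]; exact hQnK'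
  -- four applications of the perturbation lemma
  obtain ⟨ε₁, hε₁, η₁, hη₁, hkey₁⟩ := key_pert L₀ D hL₀sym Pp Qp hQpK' hPppos hQppos
  obtain ⟨ε₂, hε₂, η₂, hη₂, hkey₂⟩ :=
    key_pert (-L₀) (-D) (neg_symm L₀ hL₀sym) Pn Qn hQnnegker hPnpos hQnpos
  obtain ⟨ε₃, hε₃, η₃, hη₃, hkey₃⟩ := key_pert L₀ (-D) hL₀sym Pp Qn hQnK' hPppos hQnpos
  obtain ⟨ε₄, hε₄, η₄, hη₄, hkey₄⟩ :=
    key_pert (-L₀) D (neg_symm L₀ hL₀sym) Pn Qp hQpnegker hPnpos hQppos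
  -- little-o control
  set η : ℝ := min (min η₁ η₂) (min η₃ η₄) with hηdef
  have hηpos : 0 < η := by
    apply lt_min <;> apply lt_min <;> assumption
  obtain ⟨δ', hδ', hno⟩ := littleO_bound L t₀ hL hηpos
  set ε₀ : ℝ := min (min δ δ') (min (min ε₁ ε₂) (min ε₃ ε₄)) with hε₀def
  have hε₀pos : 0 < ε₀ := by
    apply lt_min
    · exact lt_min hδ hδ'
    · apply lt_min <;> apply lt_min <;> assumption
  refine ⟨ε₀, hε₀pos, fun ε hε hεlt => ?_⟩
  have hεδ : ε < δ := lt_of_lt_of_le hεlt (le_trans (min_le_left _ _) (min_le_left _ _))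
  have hεδ' : ε < δ' := lt_of_lt_of_le hεlt (le_trans (min_le_left _ _) (min_le_right _ _))
  have hεε₁ : ε < ε₁ := lt_of_lt_of_le hεlt (le_trans (min_le_right _ _)
    (le_trans (min_le_left _ _) (min_le_left _ _)))
  have hεε₂ : ε < ε₂ := lt_of_lt_of_le hεlt (le_trans (min_le_right _ _)
    (le_trans (min_le_left _ _) (min_le_right _ _)))
  have hεε₃ : ε < ε₃ := lt_of_lt_of_le hεlt (le_trans (min_le_right _ _)
    (le_trans (min_le_right _ _) (min_le_left _ _)))
  have hεε₄ : ε < ε₄ := lt_of_lt_of_le hεlt (le_trans (min_le_right _ _)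
    (le_trans (min_le_right _ _) (min_le_right _ _)))
  -- norm bounds at t₀ ± ε
  have hnormp : ‖L (t₀ + ε) - L₀ - ε • D‖ ≤ η * ε := by
    have h1 := hno (t₀ + ε) (by rw [show t₀ + ε - t₀ = ε by ring, abs_of_pos hε]; exact hεδ')
    rw [show t₀ + ε - t₀ = ε by ring, abs_of_pos hε] at h1
    exact h1
  have hnormm : ‖L (t₀ - ε) - L₀ - ε • (-D)‖ ≤ η * ε := by
    have h1 := hno (t₀ - ε) (by rw [show t₀ - ε - t₀ = -ε by ring, abs_neg, abs_of_pos hε]; exact hεδ')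
    rw [show t₀ - ε - t₀ = -ε by ring, abs_neg, abs_of_pos hε] at h1
    have h2 : L (t₀ - ε) - L₀ - ε • (-D) = L (t₀ - ε) - L₀ - (-ε) • D := by
      rw [smul_neg, neg_smul]
    rw [h2]
    exact h1
  have hnormnegp : ‖(-(L (t₀ + ε))) - (-L₀) - ε • (-D)‖ ≤ η * ε := by
    have h2 : (-(L (t₀ + ε))) - (-L₀) - ε • (-D) = -(L (t₀ + ε) - L₀ - ε • D) := by
      rw [smul_neg]; abel
    rw [h2, norm_neg]
    exact hnormp
  have hnormnegm : ‖(-(L (t₀ - ε))) - (-L₀) - ε • D‖ ≤ η * ε := by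
    have h2 : (-(L (t₀ - ε))) - (-L₀) - ε • D = -(L (t₀ - ε) - L₀ - ε • (-D)) := by
      rw [smul_neg]; abel
    rw [h2, norm_neg]
    exact hnormm
  -- η bounds
  have hηle₁ : η ≤ η₁ := le_trans (min_le_left _ _) (min_le_left _ _)
  have hηle₂ : η ≤ η₂ := le_trans (min_le_left _ _) (min_le_right _ _)
  have hηle₃ : η ≤ η₃ := le_trans (min_le_right _ _) (min_le_left _ _)
  have hηle₄ : η ≤ η₄ := le_trans (min_le_right _ _) (min_le_right _ _)
  have hmul : ∀ η' : ℝ, η ≤ η' → η * ε ≤ η' * ε := fun η' h =>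
    mul_le_mul_of_nonneg_right h (le_of_lt hε)
  -- positive definiteness of the perturbed operators on the four sums
  have hposp := hkey₁ ε hε hεε₁ (L (t₀ + ε)) (le_trans hnormp (hmul η₁ hηle₁))
  have hnegp := hkey₂ ε hε hεε₂ (-(L (t₀ + ε))) (le_trans hnormnegp (hmul η₂ hηle₂))
  have hposm := hkey₃ ε hε hεε₃ (L (t₀ - ε)) (le_trans hnormm (hmul η₃ hηle₃))
  have hnegm := hkey₄ ε hε hεε₄ (-(L (t₀ - ε))) (le_trans hnormnegm (hmul η₄ hηle₄))
  -- dimensions of the sums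
  have hd₁ : finrank ℝ (Pp ⊔ Qp : Submodule ℝ E) = finrank ℝ Pp + finrank ℝ Qp :=
    finrank_sup_disj _ _ (disj_posdef_ker L₀ Pp Qp hPppos hQpK')
  have hd₂ : finrank ℝ (Pn ⊔ Qn : Submodule ℝ E) = finrank ℝ Pn + finrank ℝ Qn :=
    finrank_sup_disj _ _ (disj_posdef_ker (-L₀) Pn Qn hPnpos hQnnegker)
  have hd₃ : finrank ℝ (Pp ⊔ Qn : Submodule ℝ E) = finrank ℝ Pp + finrank ℝ Qn :=
    finrank_sup_disj _ _ (disj_posdef_ker L₀ Pp Qn hPppos hQnK')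
  have hd₄ : finrank ℝ (Pn ⊔ Qp : Submodule ℝ E) = finrank ℝ Pn + finrank ℝ Qp :=
    finrank_sup_disj _ _ (disj_posdef_ker (-L₀) Pn Qp hPnpos hQpnegker)
  -- lower bounds for indices at t₀ ± ε
  have hlb₁ : finrank ℝ Pp + finrank ℝ Qp
      ≤ posIndexOn (fun x y : E => ⟪L (t₀ + ε) x, y⟫) Set.univ := by
    rw [← hd₁]
    exact le_posIndexOn _ (by simp) hposp
  have hlb₂ : finrank ℝ Pn + finrank ℝ Qn
      ≤ negIndexOn (fun x y : E => ⟪L (t₀ + ε) x, y⟫) Set.univ := by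
    rw [← hd₂]
    refine le_negIndexOn _ (by simp) fun x hx hx0 => ?_
    have := hnegp x hx hx0
    simp only [ContinuousLinearMap.neg_apply, inner_neg_left] at this
    linarith
  have hlb₃ : finrank ℝ Pp + finrank ℝ Qn
      ≤ posIndexOn (fun x y : E => ⟪L (t₀ - ε) x, y⟫) Set.univ := by
    rw [← hd₃]
    exact le_posIndexOn _ (by simp) hposm
  have hlb₄ : finrank ℝ Pn + finrank ℝ Qp
      ≤ negIndexOn (fun x y : E => ⟪L (t₀ - ε) x, y⟫) Set.univ := by
    rw [← hd₄]
    refine le_negIndexOn _ (by simp) fun x hx hx0 => ?_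
    have := hnegm x hx hx0
    simp only [ContinuousLinearMap.neg_apply, inner_neg_left] at this
    linarith
  -- nondegeneracy at t₀ ± ε
  have hker' : ∀ t : ℝ, Function.Injective ⇑(L t) → LinearMap.ker (L t : E →ₗ[ℝ] E) = ⊥ := by
    intro t hi
    ext x
    simp only [LinearMap.mem_ker, Submodule.mem_bot, ContinuousLinearMap.coe_coe]
    constructor
    · intro hx
      exact hi (show (L t) x = (L t) 0 by simpa using hx)
    · intro hx
      simp [hx]
  have hkerp : LinearMap.ker (L (t₀ + ε) : E →ₗ[ℝ] E) = ⊥ :=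
    hker' _ (hinj (t₀ + ε) (by linarith)
      (by rw [show t₀ + ε - t₀ = ε by ring, abs_of_pos hε]; exact hεδ))
  have hkerm : LinearMap.ker (L (t₀ - ε) : E →ₗ[ℝ] E) = ⊥ :=
    hker' _ (hinj (t₀ - ε) (by linarith)
      (by rw [show t₀ - ε - t₀ = -ε by ring, abs_neg, abs_of_pos hε]; exact hεδ))
  -- inertia identities
  have hIp := inertia_eq (L (t₀ + ε)) (hsym (t₀ + ε))
  rw [hkerp, finrank_bot, add_zero] at hIp
  have hIm := inertia_eq (L (t₀ - ε)) (hsym (t₀ - ε))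
  rw [hkerm, finrank_bot, add_zero] at hIm
  have hI0 := inertia_eq L₀ hL₀sym
  have hIK := inertia_restrict D hDsym K hnd
  -- upper bound: total dimensions
  -- conclude equalities by counting
  have hsum0 : finrank ℝ Pp + finrank ℝ Pn + finrank ℝ K = finrank ℝ E := by
    rw [hPpfin, hPnfin]
    exact hI0
  have hsumK : finrank ℝ Qp + finrank ℝ Qn = finrank ℝ K := by
    rw [hQpfin, hQnfin]
    exact hIK
  set a := posIndexOn (fun x y : E => ⟪L (t₀ + ε) x, y⟫) Set.univ with ha
  set b := negIndexOn (fun x y : E => ⟪L (t₀ + ε) x, y⟫) Set.univ with hb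
  set a' := posIndexOn (fun x y : E => ⟪L (t₀ - ε) x, y⟫) Set.univ with ha'
  set b' := negIndexOn (fun x y : E => ⟪L (t₀ - ε) x, y⟫) Set.univ with hb'
  refine ⟨?_, ?_, ?_⟩ <;> omega
end

section
/- There exist two smooth curves B, B̃ : ℝ → Sym₂(ℝ²) of symmetric bilinear forms on ℝ², namely B(t) = [[1, t],[t, t³]] and B̃(t) = [[1, t²],[t², t³]], such that B(0) = B̃(0), N := Ker(B(0)) = {0} ⊕ ℝ, and B(t)|_{N×N} = B̃(t)|_{N×N} for all t, yet for all sufficiently small ε > 0, n⁺(B(ε)) − n⁺(B(−ε)) = 0 while n⁺(B̃(ε)) − n⁺(B̃(−ε)) = 1. In particular, the jump of the coindex through a degeneracy instant is not determined by the restrictions of the forms to the kernel. -/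
open scoped Matrix
/-- Coindex (number of positive eigenvalues) of a symmetric matrix, defined as the largest
dimension of a subspace on which the associated quadratic form is positive definite. -/
noncomputable def matCoindex {n : ℕ} (M : Matrix (Fin n) (Fin n) ℝ) : ℕ :=
  sSup {m : ℕ | ∃ S : Submodule ℝ (Fin n → ℝ), Module.finrank ℝ S = m ∧
    ∀ x ∈ S, x ≠ 0 → 0 < x ⬝ᵥ M.mulVec x}

lemma quad_eval (a b c : ℝ) (x : Fin 2 → ℝ) :
    x ⬝ᵥ (!![a,b;b,c]).mulVec x = a*(x 0)^2 + 2*b*(x 0)*(x 1) + c*(x 1)^2 := by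
  simp [Matrix.mulVec, dotProduct, Fin.sum_univ_two]; ring

lemma bddAbove_set (M : Matrix (Fin 2) (Fin 2) ℝ) :
    BddAbove {m : ℕ | ∃ S : Submodule ℝ (Fin 2 → ℝ), Module.finrank ℝ S = m ∧
      ∀ x ∈ S, x ≠ 0 → 0 < x ⬝ᵥ M.mulVec x} := by
  refine ⟨2, ?_⟩
  rintro m ⟨S, rfl, -⟩
  simpa using Submodule.finrank_le S

lemma matCoindex_eq_two (M : Matrix (Fin 2) (Fin 2) ℝ)
    (h : ∀ x : Fin 2 → ℝ, x ≠ 0 → 0 < x ⬝ᵥ M.mulVec x) : matCoindex M = 2 := by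
  have hmem : (2:ℕ) ∈ {m : ℕ | ∃ S : Submodule ℝ (Fin 2 → ℝ), Module.finrank ℝ S = m ∧
      ∀ x ∈ S, x ≠ 0 → 0 < x ⬝ᵥ M.mulVec x} :=
    ⟨⊤, by simp, fun x _ hx => h x hx⟩
  refine le_antisymm ?_ (le_csSup (bddAbove_set M) hmem)
  refine csSup_le ⟨2, hmem⟩ ?_
  rintro m ⟨S, rfl, -⟩
  simpa using Submodule.finrank_le S

lemma matCoindex_eq_one (M : Matrix (Fin 2) (Fin 2) ℝ)
    (x₀ : Fin 2 → ℝ) (hx₀ : x₀ ≠ 0) (hpos : 0 < x₀ ⬝ᵥ M.mulVec x₀)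
    (x₁ : Fin 2 → ℝ) (hx₁ : x₁ ≠ 0) (hneg : x₁ ⬝ᵥ M.mulVec x₁ ≤ 0) :
    matCoindex M = 1 := by
  have hmem : (1:ℕ) ∈ {m : ℕ | ∃ S : Submodule ℝ (Fin 2 → ℝ), Module.finrank ℝ S = m ∧
      ∀ x ∈ S, x ≠ 0 → 0 < x ⬝ᵥ M.mulVec x} := by
    refine ⟨Submodule.span ℝ {x₀}, finrank_span_singleton hx₀, ?_⟩
    intro x hx hxne
    obtain ⟨c, rfl⟩ := Submodule.mem_span_singleton.mp hx
    have hc : c ≠ 0 := by rintro rfl; simp at hxne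
    have : (c • x₀) ⬝ᵥ M.mulVec (c • x₀) = c^2 * (x₀ ⬝ᵥ M.mulVec x₀) := by
      rw [Matrix.mulVec_smul, smul_dotProduct, dotProduct_smul]
      simp [smul_eq_mul]; ring
    rw [this]
    positivity
  refine le_antisymm ?_ (le_csSup (bddAbove_set M) hmem)
  refine csSup_le ⟨1, hmem⟩ ?_
  rintro m ⟨S, rfl, hS⟩
  by_contra hlt
  push_neg at hlt
  have h2 : Module.finrank ℝ S = 2 := by
    have := Submodule.finrank_le S
    simp only [Module.finrank_fin_fun] at this
    omega
  have : S = ⊤ := Submodule.eq_top_of_finrank_eq (by simp [h2])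
  exact absurd (hS x₁ (this ▸ Submodule.mem_top) hx₁) (not_lt.mpr hneg)

/-- **The jump of the coindex is not determined by the restriction to the kernel.**
The curves `B(t) = [[1,t],[t,t³]]` and `B̃(t) = [[1,t²],[t²,t³]]` agree at `t = 0`, have the
same kernel `N = {0}⊕ℝ` there, and coincide on `N × N` for every `t`; yet for small `ε > 0`
the coindex jump of `B` across `0` is `0` while that of `B̃` is `1`. -/
theorem coindex_jump_not_determined_by_kernel_restriction :
    ∃ B Btil : ℝ → Matrix (Fin 2) (Fin 2) ℝ,
      (∀ t, B t = !![1, t; t, t ^ 3]) ∧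
      (∀ t, Btil t = !![1, t ^ 2; t ^ 2, t ^ 3]) ∧
      (∀ i j, ContDiff ℝ (⊤ : ℕ∞) fun t => B t i j) ∧
      (∀ i j, ContDiff ℝ (⊤ : ℕ∞) fun t => Btil t i j) ∧
      B 0 = Btil 0 ∧
      {x : Fin 2 → ℝ | (B 0).mulVec x = 0} = {x : Fin 2 → ℝ | x 0 = 0} ∧
      (∀ t, ∀ x y : Fin 2 → ℝ, x 0 = 0 → y 0 = 0 →
        x ⬝ᵥ (B t).mulVec y = x ⬝ᵥ (Btil t).mulVec y) ∧
      ∃ ε₀ > 0, ∀ ε : ℝ, 0 < ε → ε < ε₀ →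
        (matCoindex (B ε) : ℤ) - (matCoindex (B (-ε)) : ℤ) = 0 ∧
        (matCoindex (Btil ε) : ℤ) - (matCoindex (Btil (-ε)) : ℤ) = 1 := by
  refine ⟨fun t => !![1, t; t, t ^ 3], fun t => !![1, t ^ 2; t ^ 2, t ^ 3],
    fun t => rfl, fun t => rfl, ?_, ?_, ?_, ?_, ?_, ?_⟩
  · intro i j
    fin_cases i <;> fin_cases j <;> simp <;> fun_prop
  · intro i j
    fin_cases i <;> fin_cases j <;> simp <;> fun_prop
  · norm_num
  · ext x
    simp [Matrix.mulVec, dotProduct, Fin.sum_univ_two, funext_iff, Fin.forall_fin_two]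
  · intro t x y hx hy
    simp [Matrix.mulVec, dotProduct, Fin.sum_univ_two, hx, hy]
  · have hne0 : (![1, 0] : Fin 2 → ℝ) ≠ 0 := by
      intro h; simpa using congrFun h 0
    refine ⟨1, one_pos, fun ε hε hε1 => ?_⟩
    have hBp : matCoindex !![1, ε; ε, ε ^ 3] = 1 := by
      refine matCoindex_eq_one _ ![1,0] hne0 ?_ ![-ε,1] (by intro h; simpa using congrFun h 1) ?_
      · rw [quad_eval]; norm_num
      · rw [quad_eval]; simp; nlinarith
    have hBm : matCoindex !![1, -ε; -ε, (-ε) ^ 3] = 1 := by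
      refine matCoindex_eq_one _ ![1,0] hne0 ?_ ![ε,1] (by intro h; simpa using congrFun h 1) ?_
      · rw [quad_eval]; norm_num
      · rw [quad_eval]; simp; nlinarith
    have hTp : matCoindex !![1, ε ^ 2; ε ^ 2, ε ^ 3] = 2 := by
      refine matCoindex_eq_two _ (fun x hx => ?_)
      rw [quad_eval]
      rcases eq_or_ne (x 1) 0 with h1 | h1
      · have h0 : x 0 ≠ 0 := by
          intro h0; apply hx; ext i; fin_cases i <;> simp [h0, h1]
        rw [h1]; simp; positivity
      · have h1' : 0 < (x 1)^2 := by positivity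
        have he : 0 < ε^3 * (1 - ε) := mul_pos (by positivity) (by linarith)
        nlinarith [sq_nonneg (x 0 + ε^2 * x 1), mul_pos he h1']
    have hTm : matCoindex !![1, (-ε) ^ 2; (-ε) ^ 2, (-ε) ^ 3] = 1 := by
      refine matCoindex_eq_one _ ![1,0] hne0 ?_ ![-ε^2,1] (by intro h; simpa using congrFun h 1) ?_
      · rw [quad_eval]; norm_num
      · rw [quad_eval]; simp; nlinarith
    rw [hBp, hBm, hTp, hTm]
    norm_num
end

section
/- Let L : [t₀-ε, t₀+ε] → Sym(V) be a smooth curve of symmetric operators on a finite-dimensional real inner product space V, with Taylor coefficients L_j = L^{(j)}(t₀)/j!. For u₀ ∈ V, u₀ lies in W_{k+1} (i.e., there is a root function of order ≥ k+1 starting at u₀) if and only if there exist u₁, …, u_k ∈ V with Σ_{j=0}^{m} L_{m−j} u_j = 0 for all m = 0, …, k (a generalized Jordan chain of length k+1 starting at u₀). Moreover, a generalized Jordan chain (u₀, …, u_k) is extendible to length k+2 if and only if Σ_{j=0}^{k} L_{k+1−j} u_j ∈ Im(L₀) = Ker(L₀)^⊥. -/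
open scoped RealInnerProductSpace

open Finset


section aux

variable {F : Type*} [NormedAddCommGroup F] [NormedSpace ℝ F]
variable {G : Type*} [NormedAddCommGroup G] [NormedSpace ℝ G]

lemma iteratedDeriv_zero_fun (n : ℕ) : iteratedDeriv n (fun _ : ℝ => (0 : F)) = fun _ => 0 := by
  induction n with
  | zero => simp [iteratedDeriv_zero]
  | succ n ih => rw [iteratedDeriv_succ', deriv_const']; exact ih

lemma iteratedDeriv_add' {n : ℕ} {f g : ℝ → F} (t : ℝ)
    (hf : ContDiff ℝ n f) (hg : ContDiff ℝ n g) :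
    iteratedDeriv n (fun s => f s + g s) t = iteratedDeriv n f t + iteratedDeriv n g t := by
  simp only [← iteratedDerivWithin_univ]
  exact iteratedDerivWithin_add (Set.mem_univ t) uniqueDiffOn_univ hf.contDiffAt.contDiffWithinAt hg.contDiffAt.contDiffWithinAt

lemma iteratedDeriv_fsum {ι : Type*} {n : ℕ} (s : Finset ι) (f : ι → ℝ → F) (t : ℝ)
    (hf : ∀ i ∈ s, ContDiff ℝ n (f i)) :
    iteratedDeriv n (fun x => ∑ i ∈ s, f i x) t = ∑ i ∈ s, iteratedDeriv n (f i) t := by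
  classical
  induction s using Finset.induction with
  | empty => simp [iteratedDeriv_zero_fun]
  | @insert a s ha ih =>
    have h1 : ContDiff ℝ n (f a) := hf a (Finset.mem_insert_self a s)
    have h2 : ContDiff ℝ n (fun x => ∑ i ∈ s, f i x) :=
      ContDiff.sum fun i hi => hf i (Finset.mem_insert_of_mem hi)
    have hrw : (fun x => ∑ i ∈ insert a s, f i x)
        = fun x => f a x + (fun y => ∑ i ∈ s, f i y) x :=
      funext fun x => Finset.sum_insert ha
    rw [hrw, iteratedDeriv_add' t h1 h2, ih fun i hi => hf i (Finset.mem_insert_of_mem hi),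
      Finset.sum_insert ha]

end aux

section aux2

variable {F : Type*} [NormedAddCommGroup F] [NormedSpace ℝ F]
variable {G : Type*} [NormedAddCommGroup G] [NormedSpace ℝ G]

lemma pascal_sum_aux (n : ℕ) (T : ℕ → G) :
    ∑ j ∈ range (n + 2), ((n + 1).choose j : ℝ) • T j
      = ∑ j ∈ range (n + 1), (n.choose j : ℝ) • T j
        + ∑ j ∈ range (n + 1), (n.choose j : ℝ) • T (j + 1) := by
  rw [Finset.sum_range_succ' (fun j => ((n + 1).choose j : ℝ) • T j) (n + 1)]
  have h1 : ∀ i ∈ range (n + 1), (((n + 1).choose (i + 1) : ℝ)) • T (i + 1)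
      = (n.choose i : ℝ) • T (i + 1) + (n.choose (i + 1) : ℝ) • T (i + 1) := by
    intro i _
    rw [Nat.choose_succ_succ n i]
    push_cast
    rw [add_smul]
  have h2 : ∑ i ∈ range (n + 1), (n.choose (i + 1) : ℝ) • T (i + 1) + ((n+1).choose 0 : ℝ) • T 0
      = ∑ j ∈ range (n + 1), (n.choose j : ℝ) • T j := by
    have e0 : (n.choose (n + 1) : ℝ) • T (n + 1) = 0 := by simp [Nat.choose_succ_self]
    rw [Finset.sum_range_succ (fun i => ((n.choose (i + 1) : ℝ)) • T (i + 1)) n, e0, add_zero,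
      show ((n+1).choose 0 : ℝ) • T 0 = ((n.choose 0 : ℝ)) • T 0 by simp,
      ← Finset.sum_range_succ' (fun j => (n.choose j : ℝ) • T j) n]
  rw [Finset.sum_congr rfl h1, Finset.sum_add_distrib, add_assoc, h2]
  exact add_comm _ _

lemma leibniz_clm (n : ℕ) : ∀ (f : ℝ → F →L[ℝ] G) (u : ℝ → F),
    ContDiff ℝ (⊤ : ℕ∞) f → ContDiff ℝ (⊤ : ℕ∞) u → ∀ t : ℝ,
    iteratedDeriv n (fun s => f s (u s)) t
      = ∑ j ∈ Finset.range (n + 1),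
          (n.choose j : ℝ) • (iteratedDeriv (n - j) f t) (iteratedDeriv j u t) := by
  induction n with
  | zero => intro f u hf hu t; simp
  | succ n ih =>
    intro f u hf hu t
    have hinf : ∀ m : ℕ, (m : WithTop ℕ∞) ≤ (⊤ : ℕ∞) := fun m => by
      exact_mod_cast (le_top : (m : ℕ∞) ≤ ⊤)
    have h1 : (1 : WithTop ℕ∞) ≤ (⊤ : ℕ∞) := by exact_mod_cast (le_top : (1:ℕ∞) ≤ ⊤)
    have hf' : ContDiff ℝ (⊤ : ℕ∞) (deriv f) := (contDiff_infty_iff_deriv.mp hf).2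
    have hu' : ContDiff ℝ (⊤ : ℕ∞) (deriv u) := (contDiff_infty_iff_deriv.mp hu).2
    have hD : deriv (fun s => f s (u s)) = fun s => (deriv f s) (u s) + f s (deriv u s) :=
      funext fun s => deriv_clm_apply ((hf.differentiable (by simp)) s) ((hu.differentiable (by simp)) s)
    rw [iteratedDeriv_succ', hD,
      iteratedDeriv_add' t ((hf'.clm_apply hu).of_le (hinf n)) ((hf.clm_apply hu').of_le (hinf n)),
      ih _ _ hf' hu t, ih _ _ hf hu' t]
    have e1 : ∀ j ∈ range (n + 1),
        (n.choose j : ℝ) • (iteratedDeriv (n - j) (deriv f) t) (iteratedDeriv j u t)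
          = (n.choose j : ℝ) • (iteratedDeriv (n + 1 - j) f t) (iteratedDeriv j u t) := by
      intro j hj
      have hjn : j ≤ n := Nat.lt_succ_iff.mp (Finset.mem_range.mp hj)
      rw [show n + 1 - j = (n - j) + 1 from by omega, iteratedDeriv_succ']
    have e2 : ∀ j ∈ range (n + 1),
        (n.choose j : ℝ) • (iteratedDeriv (n - j) f t) (iteratedDeriv j (deriv u) t)
          = (n.choose j : ℝ) • (iteratedDeriv (n + 1 - (j + 1)) f t) (iteratedDeriv (j + 1) u t) := by
      intro j hj
      rw [show n + 1 - (j + 1) = n - j from by omega, iteratedDeriv_succ']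
    rw [Finset.sum_congr rfl e1, Finset.sum_congr rfl e2,
      pascal_sum_aux n (fun j => (iteratedDeriv (n + 1 - j) f t) (iteratedDeriv j u t))]

lemma iteratedDeriv_smul_const' {n : ℕ} {g : ℝ → ℝ} (hg : ContDiff ℝ (⊤ : ℕ∞) g) (c : F) :
    iteratedDeriv n (fun s => g s • c) = fun t => iteratedDeriv n g t • c := by
  induction n generalizing g with
  | zero => simp
  | succ n ih =>
    have h1 : (1 : WithTop ℕ∞) ≤ (⊤ : ℕ∞) := by exact_mod_cast (le_top : (1:ℕ∞) ≤ ⊤)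
    have hg' : ContDiff ℝ (⊤ : ℕ∞) (deriv g) := (contDiff_infty_iff_deriv.mp hg).2
    have hD : deriv (fun s => g s • c) = fun s => deriv g s • c :=
      funext fun s => deriv_smul_const ((hg.differentiable (by simp)) s) c
    rw [iteratedDeriv_succ', hD, ih hg', iteratedDeriv_succ']

lemma iteratedDeriv_monomial (m : ℕ) (t₀ : ℝ) (n : ℕ) :
    iteratedDeriv n (fun t : ℝ => (t - t₀) ^ m)
      = fun t => (m.descFactorial n : ℝ) * (t - t₀) ^ (m - n) := by
  induction n with
  | zero => simp
  | succ n ih =>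
    rw [iteratedDeriv_succ, ih]
    funext t
    have hpow : HasDerivAt (fun t : ℝ => (t - t₀) ^ (m - n))
        (((m - n : ℕ) : ℝ) * (t - t₀) ^ (m - n - 1)) t := by
      simpa using ((hasDerivAt_id t).sub_const t₀).fun_pow (m - n)
    have : HasDerivAt (fun t : ℝ => (m.descFactorial n : ℝ) * (t - t₀) ^ (m - n))
        ((m.descFactorial n : ℝ) * (((m - n : ℕ) : ℝ) * (t - t₀) ^ (m - n - 1))) t :=
      hpow.const_mul _
    rw [this.deriv, Nat.descFactorial_succ, show m - (n + 1) = m - n - 1 from by omega]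
    push_cast
    ring

lemma iteratedDeriv_monomial_apply (m n : ℕ) (c : F) (t₀ : ℝ) :
    iteratedDeriv n (fun t : ℝ => (t - t₀) ^ m • c) t₀
      = if n = m then (m.factorial : ℝ) • c else 0 := by
  have hg : ContDiff ℝ (⊤ : ℕ∞) (fun t : ℝ => (t - t₀) ^ m) :=
    (contDiff_id.sub contDiff_const).pow m
  rw [iteratedDeriv_smul_const' hg c, iteratedDeriv_monomial m t₀ n]
  rcases lt_trichotomy n m with h | h | h
  · rw [if_neg h.ne]
    simp [Nat.sub_ne_zero_of_lt h, zero_pow (Nat.sub_ne_zero_of_lt h)]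
  · subst h
    rw [if_pos rfl]
    simp [Nat.descFactorial_self]
  · rw [if_neg h.ne']
    simp [Nat.descFactorial_eq_zero_iff_lt.mpr h]

end aux2

open scoped RealInnerProductSpace

lemma fact_inv_eq (m j : ℕ) (hj : j ≤ m) :
    ((m - j).factorial : ℝ)⁻¹ * ((j.factorial : ℝ))⁻¹
      = (m.factorial : ℝ)⁻¹ * (m.choose j : ℝ) := by
  have h := Nat.choose_mul_factorial_mul_factorial hj
  have h' : (m.choose j : ℝ) * (j.factorial : ℝ) * ((m - j).factorial : ℝ)
      = (m.factorial : ℝ) := by exact_mod_cast congrArg (Nat.cast : ℕ → ℝ) h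
  have h1 : (j.factorial : ℝ) ≠ 0 := Nat.cast_ne_zero.mpr (Nat.factorial_ne_zero j)
  have h2 : ((m - j).factorial : ℝ) ≠ 0 := Nat.cast_ne_zero.mpr (Nat.factorial_ne_zero _)
  have h3 : (m.factorial : ℝ) ≠ 0 := Nat.cast_ne_zero.mpr (Nat.factorial_ne_zero m)
  field_simp
  linear_combination -h'

lemma choose_mul_fact (m j : ℕ) (hj : j ≤ m) :
    (m.choose j : ℝ) * (j.factorial : ℝ) = (m.factorial : ℝ) * (((m - j).factorial : ℝ))⁻¹ := by
  have h := Nat.choose_mul_factorial_mul_factorial hj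
  have h' : (m.choose j : ℝ) * (j.factorial : ℝ) * ((m - j).factorial : ℝ)
      = (m.factorial : ℝ) := by exact_mod_cast congrArg (Nat.cast : ℕ → ℝ) h
  have h2 : ((m - j).factorial : ℝ) ≠ 0 := Nat.cast_ne_zero.mpr (Nat.factorial_ne_zero _)
  field_simp
  linear_combination h'

lemma sym_range_eq {E : Type*} [NormedAddCommGroup E] [InnerProductSpace ℝ E]
    [FiniteDimensional ℝ E] (T : E →L[ℝ] E) (h : ∀ x y : E, ⟪T x, y⟫ = ⟪x, T y⟫) :
    LinearMap.range (T : E →ₗ[ℝ] E) = (LinearMap.ker (T : E →ₗ[ℝ] E))ᗮ := by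
  have horth : (LinearMap.range (T : E →ₗ[ℝ] E))ᗮ = LinearMap.ker (T : E →ₗ[ℝ] E) := by
    ext x
    simp only [Submodule.mem_orthogonal, LinearMap.mem_ker, ContinuousLinearMap.coe_coe]
    constructor
    · intro hx
      have h2 : ∀ y : E, ⟪y, T x⟫ = 0 := fun y => by
        rw [← h y x]
        exact hx (T y) (LinearMap.mem_range.mpr ⟨y, rfl⟩)
      exact inner_self_eq_zero.mp (h2 (T x))
    · intro hx u hu
      obtain ⟨y, rfl⟩ := LinearMap.mem_range.mp hu
      rw [ContinuousLinearMap.coe_coe, h y x, hx, inner_zero_right]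
  calc LinearMap.range (T : E →ₗ[ℝ] E) = ((LinearMap.range (T : E →ₗ[ℝ] E))ᗮ)ᗮ := (Submodule.orthogonal_orthogonal _).symm
    _ = (LinearMap.ker (T : E →ₗ[ℝ] E))ᗮ := by rw [horth]


/-- A root function of order at least `k` for the curve `L` at `t₀`: a smooth map `u` with
`u t₀ ∈ Ker (L t₀)` such that `t ↦ L t (u t)` vanishes to order at least `k` at `t₀`. -/
def IsRootFn {E : Type*} [NormedAddCommGroup E] [InnerProductSpace ℝ E]
    (L : ℝ → E →L[ℝ] E) (t₀ : ℝ) (k : ℕ) (u : ℝ → E) : Prop :=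
  ContDiff ℝ (⊤ : ℕ∞) u ∧ L t₀ (u t₀) = 0 ∧
    ∀ j < k, iteratedDeriv j (fun t => L t (u t)) t₀ = 0

/-- `Wk L t₀ k` is the set of values `u t₀` of root functions of order at least `k`. -/
def Wk {E : Type*} [NormedAddCommGroup E] [InnerProductSpace ℝ E]
    (L : ℝ → E →L[ℝ] E) (t₀ : ℝ) (k : ℕ) : Set E :=
  {u₀ | ∃ u : ℝ → E, IsRootFn L t₀ k u ∧ u t₀ = u₀}

/-- **Root functions and generalized Jordan chains.**
`u₀ ∈ W_{k+1}` iff there is a generalized Jordan chain `(u₀, …, u_k)` for the Taylor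
coefficients `L_j = L^{(j)}(t₀)/j!`; a chain of length `k+1` is extendible iff
`Σ_{j=0}^k L_{k+1-j} u_j ∈ Im(L₀) = Ker(L₀)^⊥`. -/
theorem mem_Wk_iff_generalized_jordan_chain
    {E : Type*} [NormedAddCommGroup E] [InnerProductSpace ℝ E] [FiniteDimensional ℝ E]
    (L : ℝ → E →L[ℝ] E) (t₀ : ℝ)
    (hL : ContDiff ℝ (⊤ : ℕ∞) L)
    (hsym : ∀ t, ∀ x y : E, ⟪L t x, y⟫ = ⟪x, L t y⟫)
    (Lc : ℕ → E →L[ℝ] E)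
    (hLc : ∀ j, Lc j = (Nat.factorial j : ℝ)⁻¹ • iteratedDeriv j L t₀) :
    (∀ k : ℕ, ∀ u₀ : E, u₀ ∈ Wk L t₀ (k + 1) ↔
      ∃ u : ℕ → E, u 0 = u₀ ∧
        ∀ m ≤ k, ∑ j ∈ Finset.range (m + 1), Lc (m - j) (u j) = 0) ∧
    (∀ k : ℕ, ∀ u : ℕ → E,
      (∀ m ≤ k, ∑ j ∈ Finset.range (m + 1), Lc (m - j) (u j) = 0) →
      ((∃ w : E, ∑ j ∈ Finset.range (k + 1), Lc (k + 1 - j) (u j) + Lc 0 w = 0) ↔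
        ∑ j ∈ Finset.range (k + 1), Lc (k + 1 - j) (u j) ∈ LinearMap.range (L t₀ : E →ₗ[ℝ] E))) ∧
    LinearMap.range (L t₀ : E →ₗ[ℝ] E) = (LinearMap.ker (L t₀ : E →ₗ[ℝ] E))ᗮ := by
  have hLinf : ContDiff ℝ (⊤ : ℕ∞) L := hL.of_le (by simp)
  have hLc0 : Lc 0 = L t₀ := by rw [hLc 0]; simp [iteratedDeriv_zero]
  refine ⟨?_, ?_, sym_range_eq (L t₀) (hsym t₀)⟩
  · intro k u₀
    simp only [Wk, Set.mem_setOf_eq, IsRootFn]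
    constructor
    · rintro ⟨u, ⟨husm, hu0, hvan⟩, rfl⟩
      refine ⟨fun j => (j.factorial : ℝ)⁻¹ • iteratedDeriv j u t₀, by simp, ?_⟩
      intro m hm
      have h0 : iteratedDeriv m (fun t => L t (u t)) t₀ = 0 := hvan m (by omega)
      have hterm : ∀ j ∈ Finset.range (m + 1),
          Lc (m - j) ((j.factorial : ℝ)⁻¹ • iteratedDeriv j u t₀)
            = (m.factorial : ℝ)⁻¹ •
                ((m.choose j : ℝ) • (iteratedDeriv (m - j) L t₀) (iteratedDeriv j u t₀)) := by
        intro j hj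
        have hjm : j ≤ m := Nat.lt_succ_iff.mp (Finset.mem_range.mp hj)
        rw [hLc (m - j)]
        simp only [ContinuousLinearMap.smul_apply, map_smul, smul_smul]
        congr 1
        rw [mul_comm]
        exact fact_inv_eq m j hjm
      rw [Finset.sum_congr rfl hterm, ← Finset.smul_sum,
        ← leibniz_clm m L u hLinf (husm.of_le (by simp)) t₀, h0, smul_zero]
    · rintro ⟨c, hc0, hchain⟩
      have hUsm : ContDiff ℝ (⊤ : WithTop ℕ∞)
          (fun t : ℝ => ∑ j ∈ Finset.range (k + 1), (t - t₀) ^ j • c j) :=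
        ContDiff.sum fun j _ => ((contDiff_id.sub contDiff_const).pow j).smul contDiff_const
      have hjder : ∀ j, j ≤ k →
          iteratedDeriv j (fun t : ℝ => ∑ i ∈ Finset.range (k + 1), (t - t₀) ^ i • c i) t₀
            = (j.factorial : ℝ) • c j := by
        intro j hj
        rw [iteratedDeriv_fsum (Finset.range (k + 1)) (fun i t => (t - t₀) ^ i • c i) t₀
          (fun i _ =>
            (((contDiff_id.sub contDiff_const).pow i).smul contDiff_const).of_le le_top)]
        have hthis : ∀ i ∈ Finset.range (k + 1),
            iteratedDeriv j (fun t : ℝ => (t - t₀) ^ i • c i) t₀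
              = if j = i then (j.factorial : ℝ) • c j else 0 := by
          intro i _
          rw [iteratedDeriv_monomial_apply i j (c i) t₀]
          by_cases h : j = i
          · subst h; simp
          · simp [h]
        rw [Finset.sum_congr rfl hthis,
          Finset.sum_ite_eq (Finset.range (k + 1)) j (fun _ => (j.factorial : ℝ) • c j),
          if_pos (Finset.mem_range.mpr (by omega))]
      have hvan : ∀ m, m < k + 1 →
          iteratedDeriv m
            (fun t => L t (∑ j ∈ Finset.range (k + 1), (t - t₀) ^ j • c j)) t₀ = 0 := by
        intro m hm
        rw [leibniz_clm m L _ hLinf (hUsm.of_le le_top) t₀]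
        have hterm : ∀ j ∈ Finset.range (m + 1),
            (m.choose j : ℝ) • (iteratedDeriv (m - j) L t₀)
              (iteratedDeriv j
                (fun t : ℝ => ∑ i ∈ Finset.range (k + 1), (t - t₀) ^ i • c i) t₀)
            = (m.factorial : ℝ) • Lc (m - j) (c j) := by
          intro j hj
          have hjm : j ≤ m := Nat.lt_succ_iff.mp (Finset.mem_range.mp hj)
          rw [hjder j (by omega), hLc (m - j)]
          simp only [ContinuousLinearMap.smul_apply, map_smul, smul_smul]
          congr 1
          exact choose_mul_fact m j hjm
        rw [Finset.sum_congr rfl hterm, ← Finset.smul_sum, hchain m (by omega), smul_zero]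
      refine ⟨fun t => ∑ j ∈ Finset.range (k + 1), (t - t₀) ^ j • c j, ⟨hUsm.of_le le_top, ?_, hvan⟩, ?_⟩
      · have := hvan 0 (by omega)
        rwa [iteratedDeriv_zero] at this
      · have h0 := hjder 0 (Nat.zero_le k)
        rw [iteratedDeriv_zero] at h0
        simpa [hc0] using h0
  · intro k u _hchain
    constructor
    · rintro ⟨w, hw⟩
      refine LinearMap.mem_range.mpr ⟨-w, ?_⟩
      rw [map_neg, ← hLc0]
      exact neg_eq_of_add_eq_zero_left hw
    · intro hS
      obtain ⟨v, hv⟩ := LinearMap.mem_range.mp hS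
      exact ⟨-v, by simp only [ContinuousLinearMap.coe_coe] at hv; simp [hLc0, map_neg, hv]⟩
end

section
/- Let L : [t₀-ε, t₀+ε] → Sym(V) be a smooth curve of symmetric operators on a finite-dimensional real inner product space with an isolated degeneracy at t₀. Suppose the eigenvalues λ₁(t), …, λ_n(t) of L(t) are smooth, each nonconstant λ_i has a zero of finite order at t₀, and there exist smooth pairwise-orthogonal unit eigenvector fields v_i(t) for λ_i(t). Then W_k = span{ v_i(t₀) : λ_i^{(j)}(t₀) = 0 for all j < k }, and if v ∈ W_k is an eigenvector for λ_i(t₀) with λ_i(t₀) = λ_i'(t₀) = ⋯ = λ_i^{(k-1)}(t₀) = 0, then B_k(v, w) = (1/k!) λ_i^{(k)}(t₀) ⟨v, w⟩ for all w ∈ W_k. -/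
open scoped RealInnerProductSpace
open scoped ContDiff

section aux

variable {E : Type*} [NormedAddCommGroup E] [NormedSpace ℝ E]
  {F : Type*} [NormedAddCommGroup F] [NormedSpace ℝ F]
  {G : Type*} [NormedAddCommGroup G] [NormedSpace ℝ G]

lemma myIteratedDeriv_add {f g : ℝ → E} (n : ℕ) (hf : ContDiff ℝ ∞ f) (hg : ContDiff ℝ ∞ g)
    (x : ℝ) :
    iteratedDeriv n (fun t => f t + g t) x = iteratedDeriv n f x + iteratedDeriv n g x := by
  simp_rw [← iteratedDerivWithin_univ]
  exact iteratedDerivWithin_add (Set.mem_univ x) uniqueDiffOn_univ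
    ((hf.of_le (by exact_mod_cast le_top)).contDiffWithinAt) ((hg.of_le (by exact_mod_cast le_top)).contDiffWithinAt)

lemma myIteratedDeriv_smul (a : ℝ) {f : ℝ → E} (n : ℕ) (hf : ContDiff ℝ ∞ f) (x : ℝ) :
    iteratedDeriv n (fun t => a • f t) x = a • iteratedDeriv n f x := by
  simp_rw [← iteratedDerivWithin_univ]
  exact iteratedDerivWithin_const_smul (Set.mem_univ x) uniqueDiffOn_univ a
    ((hf.of_le (by exact_mod_cast le_top)).contDiffWithinAt)

lemma bilin_key (B : E →L[ℝ] F →L[ℝ] G) (t₀ : ℝ) :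
    ∀ (k : ℕ) (f : ℝ → E) (g : ℝ → F), ContDiff ℝ ∞ f → ContDiff ℝ ∞ g →
    (∀ j < k, iteratedDeriv j f t₀ = 0) →
    (∀ j < k, iteratedDeriv j (fun t => B (f t) (g t)) t₀ = 0) ∧
      iteratedDeriv k (fun t => B (f t) (g t)) t₀ = B (iteratedDeriv k f t₀) (g t₀) := by
  intro k
  induction k with
  | zero =>
    intro f g hf hg h0
    exact ⟨fun j hj => absurd hj (Nat.not_lt_zero j), by simp [iteratedDeriv_zero]⟩
  | succ k ih =>
    intro f g hf hg h0
    have hf' : ContDiff ℝ ∞ (deriv f) := (contDiff_infty_iff_deriv.mp hf).2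
    have hg' : ContDiff ℝ ∞ (deriv g) := (contDiff_infty_iff_deriv.mp hg).2
    have hd : deriv (fun t => B (f t) (g t))
        = fun t => B (deriv f t) (g t) + B (f t) (deriv g t) := by
      funext t
      have h1 : HasDerivAt (fun y => B (f y)) (B (deriv f t)) t :=
        (B.hasFDerivAt (x := f t)).comp_hasDerivAt t
          ((hf.differentiable (by simp) t).hasDerivAt)
      have h2 : HasDerivAt g (deriv g t) t := (hg.differentiable (by simp) t).hasDerivAt
      exact (h1.clm_apply h2).deriv
    have s1 : ContDiff ℝ ∞ (fun t => B (deriv f t) (g t)) :=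
      (B.contDiff.comp hf').clm_apply hg
    have s2 : ContDiff ℝ ∞ (fun t => B (f t) (deriv g t)) :=
      (B.contDiff.comp hf).clm_apply hg'
    have ih1 := ih (deriv f) g hf' hg (fun j hj => by
      rw [← iteratedDeriv_succ']
      exact h0 (j + 1) (Nat.succ_lt_succ hj))
    have ih2 := ih f (deriv g) hf hg' (fun j hj => h0 j (hj.trans (Nat.lt_succ_self k)))
    constructor
    · intro j hj
      match j with
      | 0 =>
        have h00 : f t₀ = 0 := h0 0 (Nat.succ_pos k)
        simp [iteratedDeriv_zero, h00]
      | (j + 1) =>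
        have hjk : j < k := Nat.lt_of_succ_lt_succ hj
        rw [iteratedDeriv_succ', hd, myIteratedDeriv_add j s1 s2, ih1.1 j hjk, ih2.1 j hjk,
          add_zero]
    · have hk0 : iteratedDeriv k f t₀ = 0 := h0 k (Nat.lt_succ_self k)
      rw [iteratedDeriv_succ', hd, myIteratedDeriv_add k s1 s2, ih1.2, ih2.2, hk0,
        iteratedDeriv_succ']
      simp

lemma smul_key (t₀ : ℝ) (k : ℕ) (f : ℝ → ℝ) (g : ℝ → E) (hf : ContDiff ℝ ∞ f)
    (hg : ContDiff ℝ ∞ g) (h0 : ∀ j < k, iteratedDeriv j f t₀ = 0) :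
    (∀ j < k, iteratedDeriv j (fun t => f t • g t) t₀ = 0) ∧
      iteratedDeriv k (fun t => f t • g t) t₀ = iteratedDeriv k f t₀ • g t₀ := by
  simpa [ContinuousLinearMap.lsmul_apply] using
    bilin_key (ContinuousLinearMap.lsmul ℝ ℝ : ℝ →L[ℝ] E →L[ℝ] E) t₀ k f g hf hg h0

lemma mul_key (t₀ : ℝ) (k : ℕ) (f g : ℝ → ℝ) (hf : ContDiff ℝ ∞ f)
    (hg : ContDiff ℝ ∞ g) (h0 : ∀ j < k, iteratedDeriv j f t₀ = 0) :
    (∀ j < k, iteratedDeriv j (fun t => f t * g t) t₀ = 0) ∧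
      iteratedDeriv k (fun t => f t * g t) t₀ = iteratedDeriv k f t₀ * g t₀ := by
  simpa [smul_eq_mul] using smul_key t₀ k f g hf hg h0

lemma inner_key {H : Type*} [NormedAddCommGroup H] [InnerProductSpace ℝ H]
    (t₀ : ℝ) (k : ℕ) (f g : ℝ → H) (hf : ContDiff ℝ ∞ f) (hg : ContDiff ℝ ∞ g)
    (h0 : ∀ j < k, iteratedDeriv j f t₀ = 0) :
    (∀ j < k, iteratedDeriv j (fun t => ⟪f t, g t⟫) t₀ = 0) ∧
      iteratedDeriv k (fun t => ⟪f t, g t⟫) t₀ = ⟪iteratedDeriv k f t₀, g t₀⟫ := by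
  exact bilin_key (innerSL ℝ (E := H)) t₀ k f g hf hg h0

end aux

/-- **Computation of `W_k` and `B_k` in the diagonalizable case.**
With smooth eigenvalues `λ_i` (each nonconstant one vanishing to finite order at `t₀`) and
smooth orthonormal eigenvector fields `v_i`, for `k ≥ 1`:
`W_k = span{v_i(t₀) : λ_i^{(j)}(t₀) = 0 for all j < k}`, and for such `i` the form `B_k`
satisfies `B_k(v_i(t₀), w) = (1/k!) λ_i^{(k)}(t₀) ⟪v_i(t₀), w⟫` for all `w ∈ W_k`
(equivalently, `⟪(d/dt)^k[L u]|_{t₀}, w⟫ = λ_i^{(k)}(t₀) ⟪v_i(t₀), w⟫` for any root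
function `u` of order `≥ k` with `u t₀ = v_i t₀`). -/
theorem Wk_and_Bk_of_smooth_diagonalization
    {E : Type*} [NormedAddCommGroup E] [InnerProductSpace ℝ E] [FiniteDimensional ℝ E]
    (L : ℝ → E →L[ℝ] E) (t₀ : ℝ)
    (hL : ContDiff ℝ (⊤ : ℕ∞) L)
    (hsym : ∀ t, ∀ x y : E, ⟪L t x, y⟫ = ⟪x, L t y⟫)
    (hisol : ∃ δ > 0, ∀ t, t ≠ t₀ → |t - t₀| < δ → Function.Injective ⇑(L t))
    (lam : Fin (Module.finrank ℝ E) → ℝ → ℝ)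
    (v : Fin (Module.finrank ℝ E) → ℝ → E)
    (hlam : ∀ i, ContDiff ℝ (⊤ : ℕ∞) (lam i)) (hv : ∀ i, ContDiff ℝ (⊤ : ℕ∞) (v i))
    (heig : ∀ i t, L t (v i t) = lam i t • v i t)
    (hON : ∀ t, Orthonormal ℝ fun i => v i t)
    (hord : ∀ i, (∃ t, lam i t ≠ lam i t₀) → ∃ m, iteratedDeriv m (lam i) t₀ ≠ 0) :
    (∀ k : ℕ, 1 ≤ k → Wk L t₀ k =
      ↑(Submodule.span ℝ
        {x : E | ∃ i, (∀ j < k, iteratedDeriv j (lam i) t₀ = 0) ∧ x = v i t₀})) ∧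
    (∀ k : ℕ, 1 ≤ k → ∀ i, (∀ j < k, iteratedDeriv j (lam i) t₀ = 0) →
      ∀ u : ℝ → E, IsRootFn L t₀ k u → u t₀ = v i t₀ →
      ∀ w ∈ Wk L t₀ k,
        ⟪iteratedDeriv k (fun t => L t (u t)) t₀, w⟫
          = iteratedDeriv k (lam i) t₀ * ⟪v i t₀, w⟫) := by
  classical
  have hL' : ContDiff ℝ ∞ L := hL.of_le (by simp)
  have hlam' : ∀ i, ContDiff ℝ ∞ (lam i) := fun i => (hlam i).of_le (by simp)
  have hv' : ∀ i, ContDiff ℝ ∞ (v i) := fun i => (hv i).of_le (by simp)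
  -- the key "swap" identity
  have hswap : ∀ (u : ℝ → E) (i : Fin (Module.finrank ℝ E)),
      (fun t => ⟪L t (u t), v i t⟫) = fun t => lam i t * ⟪u t, v i t⟫ := by
    intro u i
    funext t
    rw [hsym t, heig, real_inner_smul_right]
  have key1 : ∀ k : ℕ, 1 ≤ k → Wk L t₀ k =
      ↑(Submodule.span ℝ
        {x : E | ∃ i, (∀ j < k, iteratedDeriv j (lam i) t₀ = 0) ∧ x = v i t₀}) := by
    intro k hk
    apply Set.Subset.antisymm
    · rintro u₀ ⟨u, ⟨hus, hu0, huvan⟩, rfl⟩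
      have hus' : ContDiff ℝ ∞ u := hus.of_le (by simp)
      rcases Nat.eq_zero_or_pos (Module.finrank ℝ E) with h0 | hpos
      · have : Subsingleton E := Module.finrank_zero_iff.mp h0
        have : u t₀ = 0 := Subsingleton.elim _ _
        rw [this]
        exact Submodule.zero_mem _
      haveI : Nonempty (Fin (Module.finrank ℝ E)) := Fin.pos_iff_nonempty.mp hpos
      have hbasis : ∑ i, ⟪v i t₀, u t₀⟫ • v i t₀ = u t₀ := by
        let b := basisOfLinearIndependentOfCardEqFinrank
          (hON t₀).linearIndependent (by simp)
        have hb : ⇑b = fun i => v i t₀ :=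
          coe_basisOfLinearIndependentOfCardEqFinrank _ _
        have hONb : Orthonormal ℝ ⇑b := by rw [hb]; exact hON t₀
        have := (b.toOrthonormalBasis hONb).sum_repr' (u t₀)
        simpa [Module.Basis.coe_toOrthonormalBasis, hb] using this
      rw [← hbasis]
      refine Submodule.sum_mem _ fun i _ => ?_
      by_cases hi : ∀ j < k, iteratedDeriv j (lam i) t₀ = 0
      · exact Submodule.smul_mem _ _ (Submodule.subset_span ⟨i, hi, rfl⟩)
      · push_neg at hi
        obtain ⟨j, hjk, hjne⟩ := hi
        have hex : ∃ m, iteratedDeriv m (lam i) t₀ ≠ 0 := ⟨j, hjne⟩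
        have hmk : Nat.find hex < k := lt_of_le_of_lt (Nat.find_min' hex hjne) hjk
        have hmvan : ∀ j' < Nat.find hex, iteratedDeriv j' (lam i) t₀ = 0 :=
          fun j' hj' => not_not.mp (Nat.find_min hex hj')
        have hLu : ContDiff ℝ ∞ (fun t => L t (u t)) := hL'.clm_apply hus'
        have hA := (inner_key t₀ k (fun t => L t (u t)) (v i) hLu (hv' i) huvan).1
          (Nat.find hex) hmk
        have hB := (mul_key t₀ (Nat.find hex) (lam i) (fun t => ⟪u t, v i t⟫)
          (hlam' i) (hus'.inner ℝ (hv' i)) hmvan).2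
        rw [hswap u i, hB] at hA
        have hc : ⟪u t₀, v i t₀⟫ = 0 :=
          (mul_eq_zero.mp hA).resolve_left (Nat.find_spec hex)
        rw [real_inner_comm, hc, zero_smul]
        exact Submodule.zero_mem _
    · intro x hx
      induction hx using Submodule.span_induction with
      | mem x hxS =>
        obtain ⟨i, hi, rfl⟩ := hxS
        have hlam0 : lam i t₀ = 0 := by
          have := hi 0 hk
          rwa [iteratedDeriv_zero] at this
        refine ⟨v i, ⟨hv i, ?_, ?_⟩, rfl⟩
        · rw [heig, hlam0, zero_smul]
        · intro j hj
          have := (smul_key t₀ k (lam i) (v i) (hlam' i) (hv' i) hi).1 j hj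
          simpa only [heig] using this
      | zero =>
        refine ⟨fun _ => 0, ⟨contDiff_const, by simp, fun j hj => ?_⟩, rfl⟩
        have : (fun t => L t (0 : E)) = fun _ : ℝ => (0 : E) := by
          funext t; simp
        rw [this]
        have hz : ∀ j', iteratedDeriv j' (fun _ : ℝ => (0 : E)) t₀ = 0 := by
          intro j'
          induction j' with
          | zero => simp [iteratedDeriv_zero]
          | succ m ihm =>
            rw [iteratedDeriv_succ']
            simp only [deriv_const']
            exact (by
              have : (deriv fun _ : ℝ => (0 : E)) = fun _ : ℝ => (0 : E) := by
                funext t; simp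
              rw [this] at *; exact ihm)
        exact hz j
      | add x y hx' hy' hpx hpy =>
        obtain ⟨u1, ⟨h1s, h10, h1v⟩, rfl⟩ := hpx
        obtain ⟨u2, ⟨h2s, h20, h2v⟩, rfl⟩ := hpy
        refine ⟨fun t => u1 t + u2 t, ⟨h1s.add h2s, ?_, ?_⟩, rfl⟩
        · rw [map_add, h10, h20, add_zero]
        · intro j hj
          have heq : (fun t => L t (u1 t + u2 t))
              = fun t => L t (u1 t) + L t (u2 t) := by
            funext t; rw [map_add]
          rw [heq, myIteratedDeriv_add j (hL'.clm_apply (h1s.of_le (by simp)))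
            (hL'.clm_apply (h2s.of_le (by simp))), h1v j hj, h2v j hj, add_zero]
      | smul a x hx' hpx =>
        obtain ⟨u1, ⟨h1s, h10, h1v⟩, rfl⟩ := hpx
        refine ⟨fun t => a • u1 t, ⟨h1s.const_smul a, ?_, ?_⟩, rfl⟩
        · rw [map_smul, h10, smul_zero]
        · intro j hj
          have heq : (fun t => L t (a • u1 t)) = fun t => a • L t (u1 t) := by
            funext t; rw [map_smul]
          rw [heq, myIteratedDeriv_smul a j (hL'.clm_apply (h1s.of_le (by simp))), h1v j hj,
            smul_zero]
  refine ⟨key1, ?_⟩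
  intro k hk i hgood u hu huv w hw
  rw [key1 k hk] at hw
  have hus' : ContDiff ℝ ∞ u := hu.1.of_le (by simp)
  have hLu : ContDiff ℝ ∞ (fun t => L t (u t)) := hL'.clm_apply hus'
  induction hw using Submodule.span_induction with
  | mem x hxS =>
    obtain ⟨j', hj', rfl⟩ := hxS
    have hIK := (inner_key t₀ k (fun t => L t (u t)) (v j') hLu (hv' j') hu.2.2).2
    have hMK := (mul_key t₀ k (lam j') (fun t => ⟪u t, v j' t⟫)
      (hlam' j') (hus'.inner ℝ (hv' j')) hj').2
    rw [hswap u j', hMK] at hIK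
    rw [← hIK, huv]
    by_cases hij : i = j'
    · subst hij
      rw [real_inner_comm]
    · rw [(hON t₀).2 hij]
      ring
  | zero => simp
  | add x y hx' hy' hpx hpy =>
    rw [inner_add_right, inner_add_right, hpx, hpy]; ring
  | smul a x hx' hpx =>
    rw [real_inner_smul_right, real_inner_smul_right, hpx]; ring
end

section
/- Let L : [t₀-ε, t₀+ε] → Sym(V) be any smooth curve of symmetric operators on a finite-dimensional real inner product space having a unique degeneracy instant at t₀, with associated filtration W_k and bilinear forms B_k. Then W_{k+1} = Ker(B_k) for all k ≥ 1. -/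
open scoped RealInnerProductSpace

section Aux

variable {E : Type*} [NormedAddCommGroup E] [InnerProductSpace ℝ E]

lemma iD_clm_comp {F G : Type*} [NormedAddCommGroup F] [NormedSpace ℝ F]
    [NormedAddCommGroup G] [NormedSpace ℝ G]
    (g : F →L[ℝ] G) {f : ℝ → F} (hf : ContDiff ℝ (⊤ : ℕ∞) f) (n : ℕ) (x : ℝ) :
    iteratedDeriv n (fun t => g (f t)) x = g (iteratedDeriv n f x) := by
  have h := g.iteratedFDeriv_comp_left (hf.contDiffAt (x := x)) (by exact_mod_cast (le_top : (n : ℕ∞) ≤ ⊤))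
  rw [iteratedDeriv_eq_iteratedFDeriv, iteratedDeriv_eq_iteratedFDeriv]
  have h2 : (fun t => g (f t)) = ⇑g ∘ f := rfl
  rw [h2, h]
  rfl

lemma natcast_lt_top (m : ℕ) : (m : WithTop ℕ∞) < ((⊤ : ℕ∞) : WithTop ℕ∞) := by
  exact_mod_cast ENat.coe_lt_top m

/-- Leibniz rule. -/
lemma iD_leibniz (f : ℝ → E →L[ℝ] E) (u : ℝ → E)
    (hf : ContDiff ℝ (⊤ : ℕ∞) f) (hu : ContDiff ℝ (⊤ : ℕ∞) u) (n : ℕ) (x : ℝ) :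
    iteratedDeriv n (fun t => f t (u t)) x
      = ∑ i ∈ Finset.range (n + 1),
          (n.choose i : ℝ) • (iteratedDeriv i f x) (iteratedDeriv (n - i) u x) := by
  induction n generalizing x with
  | zero => simp
  | succ n IH =>
    have hdf : ∀ (m : ℕ) (t : ℝ),
        HasDerivAt (iteratedDeriv m f) (iteratedDeriv (m+1) f t) t := by
      intro m t
      have := ((hf.differentiable_iteratedDeriv m
        (natcast_lt_top m)).differentiableAt (x := t)).hasDerivAt
      rwa [iteratedDeriv_succ]
    have hdu : ∀ (m : ℕ) (t : ℝ),
        HasDerivAt (iteratedDeriv m u) (iteratedDeriv (m+1) u t) t := by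
      intro m t
      have := ((hu.differentiable_iteratedDeriv m
        (natcast_lt_top m)).differentiableAt (x := t)).hasDerivAt
      rwa [iteratedDeriv_succ]
    have hterm : ∀ i ∈ Finset.range (n+1),
        HasDerivAt (fun t => (n.choose i : ℝ) • (iteratedDeriv i f t) (iteratedDeriv (n - i) u t))
          ((n.choose i : ℝ) • ((iteratedDeriv (i+1) f x) (iteratedDeriv (n-i) u x)
            + (iteratedDeriv i f x) (iteratedDeriv (n-i+1) u x))) x := by
      intro i _
      exact ((hdf i x).clm_apply (hdu (n-i) x)).const_smul _
    have hstep : iteratedDeriv (n+1) (fun t => f t (u t)) x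
        = ∑ i ∈ Finset.range (n+1), (n.choose i : ℝ) •
            ((iteratedDeriv (i+1) f x) (iteratedDeriv (n-i) u x)
              + (iteratedDeriv i f x) (iteratedDeriv (n-i+1) u x)) := by
      rw [iteratedDeriv_succ]
      have hfun : iteratedDeriv n (fun t => f t (u t))
          = fun t => ∑ i ∈ Finset.range (n+1),
              (n.choose i : ℝ) • (iteratedDeriv i f t) (iteratedDeriv (n - i) u t) :=
        funext fun t => IH t
      rw [hfun]
      exact (HasDerivAt.fun_sum hterm).deriv
    rw [hstep]
    have expand : ∀ i ∈ Finset.range (n+1), (n.choose i : ℝ) •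
            ((iteratedDeriv (i+1) f x) (iteratedDeriv (n-i) u x)
              + (iteratedDeriv i f x) (iteratedDeriv (n-i+1) u x))
        = (n.choose i : ℝ) • (iteratedDeriv (i+1) f x) (iteratedDeriv (n-i) u x)
          + (n.choose i : ℝ) • (iteratedDeriv i f x) (iteratedDeriv (n-i+1) u x) := by
      intro i _; rw [smul_add]
    rw [Finset.sum_congr rfl expand, Finset.sum_add_distrib]
    rw [Finset.sum_range_succ' (fun i => (Nat.choose (n+1) i : ℝ) •
      (iteratedDeriv i f x) (iteratedDeriv (n + 1 - i) u x)) (n+1)]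
    have h1 : ∀ i ∈ Finset.range (n+1),
        ((n+1).choose (i+1) : ℝ) • (iteratedDeriv (i+1) f x) (iteratedDeriv (n+1-(i+1)) u x)
        = (n.choose i : ℝ) • (iteratedDeriv (i+1) f x) (iteratedDeriv (n-i) u x)
          + (n.choose (i+1) : ℝ) • (iteratedDeriv (i+1) f x) (iteratedDeriv (n-i) u x) := by
      intro i _
      have h3 : n + 1 - (i+1) = n - i := by omega
      rw [h3, Nat.choose_succ_succ]
      push_cast
      rw [add_smul]
    rw [Finset.sum_congr rfl h1, Finset.sum_add_distrib]
    have h2 : ∑ i ∈ Finset.range (n+1),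
          (n.choose (i+1) : ℝ) • (iteratedDeriv (i+1) f x) (iteratedDeriv (n-i) u x)
        + ((n+1).choose 0 : ℝ) • (iteratedDeriv 0 f x) (iteratedDeriv (n+1-0) u x)
        = ∑ i ∈ Finset.range (n+1),
          (n.choose i : ℝ) • (iteratedDeriv i f x) (iteratedDeriv (n-i+1) u x) := by
      rw [Finset.sum_range_succ]
      rw [Finset.sum_range_succ' (fun i => (n.choose i : ℝ) •
        (iteratedDeriv i f x) (iteratedDeriv (n-i+1) u x)) n]
      simp only [Nat.choose_succ_self, Nat.cast_zero, zero_smul, add_zero, Nat.choose_zero_right,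
        Nat.cast_one, Nat.sub_zero, one_smul]
      congr 1
      apply Finset.sum_congr rfl
      intro i hi
      have h4 : n - (i+1) + 1 = n - i := by
        simp only [Finset.mem_range] at hi; omega
      rw [h4]
    rw [← h2]
    abel

end Aux

section Aux2

variable {E : Type*} [NormedAddCommGroup E] [InnerProductSpace ℝ E]

/-- Normalized Taylor coefficients of the curve `L`. -/
noncomputable def jetA (L : ℝ → E →L[ℝ] E) (t₀ : ℝ) (j : ℕ) : E →L[ℝ] E :=
  (j.factorial : ℝ)⁻¹ • iteratedDeriv j L t₀

/-- Jet condition operator: `jetC L t₀ c j = ∑_{i ≤ j} jetA (j-i) (c i)`. -/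
noncomputable def jetC (L : ℝ → E →L[ℝ] E) (t₀ : ℝ) (c : ℕ → E) (j : ℕ) : E :=
  ∑ i ∈ Finset.range (j + 1), jetA L t₀ (j - i) (c i)

/-- Normalized jet (Taylor coefficients) of a function. -/
noncomputable def cjet (u : ℝ → E) (t₀ : ℝ) (i : ℕ) : E :=
  (i.factorial : ℝ)⁻¹ • iteratedDeriv i u t₀

/-- A formal jet of a root function of order at least `k`. -/
def IsJet (L : ℝ → E →L[ℝ] E) (t₀ : ℝ) (k : ℕ) (c : ℕ → E) : Prop :=
  ∀ j < k, jetC L t₀ c j = 0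

lemma jetC_congr {L : ℝ → E →L[ℝ] E} {t₀ : ℝ} {c d : ℕ → E} {j : ℕ}
    (h : ∀ i ≤ j, c i = d i) : jetC L t₀ c j = jetC L t₀ d j := by
  apply Finset.sum_congr rfl
  intro i hi
  rw [h i (by simp only [Finset.mem_range] at hi; omega)]

lemma jetC_add (L : ℝ → E →L[ℝ] E) (t₀ : ℝ) (c d : ℕ → E) (j : ℕ) :
    jetC L t₀ (fun i => c i + d i) j = jetC L t₀ c j + jetC L t₀ d j := by
  simp [jetC, Finset.sum_add_distrib]

/-- Symmetry of the Taylor coefficients. -/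
lemma jetA_symm {L : ℝ → E →L[ℝ] E} {t₀ : ℝ} (hL : ContDiff ℝ (⊤ : ℕ∞) L)
    (hsym : ∀ t, ∀ x y : E, ⟪L t x, y⟫ = ⟪x, L t y⟫) (j : ℕ) (x y : E) :
    ⟪jetA L t₀ j x, y⟫ = ⟪x, jetA L t₀ j y⟫ := by
  have key : ⟪iteratedDeriv j L t₀ x, y⟫ = ⟪x, iteratedDeriv j L t₀ y⟫ := by
    have e1 : ∀ n t, iteratedDeriv n (fun s => ⟪y, L s x⟫) t
        = ⟪y, iteratedDeriv n L t x⟫ := by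
      intro n t
      have := iD_clm_comp ((innerSL ℝ y).comp (ContinuousLinearMap.apply ℝ E x)) hL n t
      simpa using this
    have e2 : ∀ n t, iteratedDeriv n (fun s => ⟪x, L s y⟫) t
        = ⟪x, iteratedDeriv n L t y⟫ := by
      intro n t
      have := iD_clm_comp ((innerSL ℝ x).comp (ContinuousLinearMap.apply ℝ E y)) hL n t
      simpa using this
    have hfun : (fun s => ⟪y, L s x⟫) = fun s => ⟪x, L s y⟫ := by
      funext s
      rw [real_inner_comm, hsym s x y]
    have h5 := e1 j t₀
    rw [hfun, e2 j t₀] at h5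
    rw [h5]
    exact real_inner_comm _ _
  simp only [jetA, ContinuousLinearMap.smul_apply, real_inner_smul_left, real_inner_smul_right,
    key]

/-- Key identity: iterated derivative of `t ↦ L t (u t)` in terms of normalized jets. -/
lemma iD_eq_jetC {L : ℝ → E →L[ℝ] E} {t₀ : ℝ} (hL : ContDiff ℝ (⊤ : ℕ∞) L)
    {u : ℝ → E} (hu : ContDiff ℝ (⊤ : ℕ∞) u) (n : ℕ) :
    iteratedDeriv n (fun t => L t (u t)) t₀
      = (n.factorial : ℝ) • jetC L t₀ (cjet u t₀) n := by
  rw [iD_leibniz L u hL hu n t₀]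
  rw [show (∑ i ∈ Finset.range (n + 1),
      (n.choose i : ℝ) • (iteratedDeriv i L t₀) (iteratedDeriv (n - i) u t₀))
    = ∑ i ∈ Finset.range (n + 1),
      (fun i => (n.choose i : ℝ) • (iteratedDeriv i L t₀) (iteratedDeriv (n - i) u t₀)) i
    from rfl]
  rw [← Finset.sum_range_reflect]
  rw [jetC, Finset.smul_sum]
  apply Finset.sum_congr rfl
  intro i hi
  simp only [Finset.mem_range] at hi
  have hin : i ≤ n := by omega
  have h1 : n + 1 - 1 - i = n - i := by omega
  have h2 : n - (n - i) = i := by omega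
  simp only [h1, h2]
  have hfn : (((n - i).factorial : ℝ)) ≠ 0 := Nat.cast_ne_zero.2 (Nat.factorial_ne_zero _)
  have hfi : ((i.factorial : ℝ)) ≠ 0 := Nat.cast_ne_zero.2 (Nat.factorial_ne_zero _)
  have h0 := Nat.choose_mul_factorial_mul_factorial hin
  have h0' : ((n.choose i : ℕ) : ℝ) * (i.factorial : ℝ) * ((n - i).factorial : ℝ)
      = (n.factorial : ℝ) := by exact_mod_cast congrArg (fun m : ℕ => (m : ℝ)) h0
  have hch : (n.choose (n - i) : ℝ)
      = (n.factorial : ℝ) * ((n - i).factorial : ℝ)⁻¹ * ((i.factorial : ℝ))⁻¹ := by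
    rw [Nat.choose_symm hin]
    field_simp
    linarith [h0']
  rw [hch]
  simp only [jetA, cjet, ContinuousLinearMap.smul_apply, map_smul, smul_smul]
  congr 1
  ring

end Aux2

section Aux3

variable {E : Type*} [NormedAddCommGroup E] [InnerProductSpace ℝ E]

/-- The fundamental symmetry of the pairing between jets. -/
lemma jetC_pairing_symm {L : ℝ → E →L[ℝ] E} {t₀ : ℝ} (hL : ContDiff ℝ (⊤ : ℕ∞) L)
    (hsym : ∀ t, ∀ x y : E, ⟪L t x, y⟫ = ⟪x, L t y⟫) (n : ℕ) (c d : ℕ → E) :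
    ∑ j ∈ Finset.range (n + 1), ⟪jetC L t₀ c j, d (n - j)⟫
      = ∑ j ∈ Finset.range (n + 1), ⟪jetC L t₀ d j, c (n - j)⟫ := by
  have expand : ∀ (c d : ℕ → E),
      ∑ j ∈ Finset.range (n + 1), ⟪jetC L t₀ c j, d (n - j)⟫
      = ∑ p ∈ (Finset.range (n+1)).sigma (fun j => Finset.range (j+1)),
          ⟪jetA L t₀ (p.1 - p.2) (c p.2), d (n - p.1)⟫ := by
    intro c d
    rw [Finset.sum_sigma]
    apply Finset.sum_congr rfl
    intro j _
    rw [jetC, sum_inner]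
  rw [expand c d, expand d c]
  apply Finset.sum_nbij' (fun p => ⟨n - p.2, n - p.1⟩) (fun p => ⟨n - p.2, n - p.1⟩)
  · intro p hp
    simp only [Finset.mem_sigma, Finset.mem_range] at hp ⊢
    omega
  · intro p hp
    simp only [Finset.mem_sigma, Finset.mem_range] at hp ⊢
    omega
  · intro p hp
    simp only [Finset.mem_sigma, Finset.mem_range] at hp
    ext <;> simp <;> omega
  · intro p hp
    simp only [Finset.mem_sigma, Finset.mem_range] at hp
    ext <;> simp <;> omega
  · intro p hp
    simp only [Finset.mem_sigma, Finset.mem_range] at hp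
    have h1 : n - p.2 - (n - p.1) = p.1 - p.2 := by omega
    have h2 : n - (n - p.2) = p.2 := by omega
    have h3 : n - (n - p.1) = p.1 := by omega
    simp only [h1, h2, h3]
    rw [jetA_symm hL hsym]
    exact real_inner_comm _ _

/-- Polynomial with prescribed normalized jet. -/
noncomputable def polyJ (t₀ : ℝ) (c : ℕ → E) (m : ℕ) : ℝ → E :=
  fun t => ∑ i ∈ Finset.range m, (t - t₀) ^ i • c i

lemma polyJ_contDiff (t₀ : ℝ) (c : ℕ → E) (m : ℕ) : ContDiff ℝ (⊤ : ℕ∞) (polyJ t₀ c m) := by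
  apply ContDiff.sum
  intro i _
  exact (((contDiff_id.sub contDiff_const).pow i).smul contDiff_const)

lemma polyJ_apply_self (t₀ : ℝ) (c : ℕ → E) {m : ℕ} (hm : 1 ≤ m) :
    polyJ t₀ c m t₀ = c 0 := by
  rw [polyJ, Finset.sum_eq_single 0]
  · simp
  · intro i _ hi
    rw [sub_self, zero_pow hi, zero_smul]
  · intro h
    exact absurd (Finset.mem_range.2 (by omega)) h

lemma iD_monomial (a : ℝ) (i j : ℕ) :
    iteratedDeriv j (fun t : ℝ => (t - a) ^ i)
      = fun t => (i.descFactorial j : ℝ) * (t - a) ^ (i - j) := by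
  induction j with
  | zero => simp
  | succ j IH =>
    funext t
    rw [iteratedDeriv_succ, IH]
    have hd : HasDerivAt (fun t : ℝ => (i.descFactorial j : ℝ) * (t - a) ^ (i - j))
        ((i.descFactorial j : ℝ) * (((i - j : ℕ) : ℝ) * (t - a) ^ (i - j - 1) * 1)) t := by
      have hd0 := (((hasDerivAt_id t).sub_const a).pow (i - j)).const_mul
        ((i.descFactorial j : ℝ))
      simpa [id_eq] using hd0
    rw [hd.deriv]
    rcases le_or_gt i j with h | h
    · have h1 : i - j = 0 := by omega
      have h2 : i.descFactorial (j + 1) = 0 := by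
        rw [Nat.descFactorial_eq_zero_iff_lt]; omega
      simp [h1, h2]
    · have h1 : i - j - 1 = i - (j + 1) := by omega
      rw [h1, Nat.descFactorial_succ]
      have h2 : ((i - j : ℕ) : ℝ) = (i : ℝ) - (j : ℝ) := by
        push_cast [Nat.cast_sub h.le]; ring
      push_cast [Nat.cast_sub h.le]
      ring

lemma iD_monomial_self (a : ℝ) (i j : ℕ) :
    iteratedDeriv j (fun t : ℝ => (t - a) ^ i) a
      = if j = i then (i.factorial : ℝ) else 0 := by
  rw [iD_monomial]
  rcases eq_or_ne j i with rfl | h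
  · simp [Nat.descFactorial_self]
  · rcases lt_or_gt_of_ne h with h | h
    · have : i - j ≠ 0 := by omega
      simp [sub_self, zero_pow this, h.ne]
    · have : i.descFactorial j = 0 := Nat.descFactorial_eq_zero_iff_lt.2 h
      simp [this, h.ne']

lemma iD_smul_const (h : ℝ → ℝ) (hh : ContDiff ℝ (⊤ : ℕ∞) h) (c : E) (n : ℕ) (t : ℝ) :
    iteratedDeriv n (fun s => h s • c) t = iteratedDeriv n h t • c := by
  have := iD_clm_comp (ContinuousLinearMap.toSpanSingleton ℝ c) hh n t
  simpa [ContinuousLinearMap.toSpanSingleton_apply] using this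

lemma iD_fsum {ι : Type*} (s : Finset ι) (f : ι → ℝ → E)
    (hf : ∀ i ∈ s, ContDiff ℝ (⊤ : ℕ∞) (f i)) (n : ℕ) (t : ℝ) :
    iteratedDeriv n (fun x => ∑ i ∈ s, f i x) t = ∑ i ∈ s, iteratedDeriv n (f i) t := by
  classical
  induction s using Finset.cons_induction with
  | empty =>
    have h0 : (fun x : ℝ => ∑ i ∈ (∅ : Finset ι), f i x) = fun s : ℝ => (0 : ℝ →L[ℝ] E) s := by
      funext x; simp
    rw [h0]
    simpa using iD_clm_comp (0 : ℝ →L[ℝ] E) contDiff_id n t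
  | cons a s ha IH =>
    rw [Finset.sum_cons]
    have hsum : ∀ x, ∑ i ∈ Finset.cons a s ha, f i x = f a x + ∑ i ∈ s, f i x := by
      intro x; rw [Finset.sum_cons]
    rw [show (fun x => ∑ i ∈ Finset.cons a s ha, f i x)
        = fun x => f a x + ∑ i ∈ s, f i x from funext hsum]
    have h1 : ContDiff ℝ (⊤ : ℕ∞) (f a) := hf a (by simp)
    have h2 : ContDiff ℝ (⊤ : ℕ∞) (fun x => ∑ i ∈ s, f i x) := by
      apply ContDiff.sum
      intro i hi
      exact hf i (Finset.mem_cons_of_mem hi)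
    have := iteratedDerivWithin_add (Set.mem_univ t) uniqueDiffOn_univ
      (f := f a) (g := fun x => ∑ i ∈ s, f i x) (n := n)
      ((h1.of_le (by exact_mod_cast le_top)).contDiffWithinAt) ((h2.of_le (by exact_mod_cast le_top)).contDiffWithinAt)
    simp only [iteratedDerivWithin_univ] at this
    rw [show (fun x => f a x + ∑ i ∈ s, f i x) = f a + fun x => ∑ i ∈ s, f i x from rfl]
    rw [this, IH (fun i hi => hf i (Finset.mem_cons_of_mem hi))]

lemma cjet_polyJ (t₀ : ℝ) (c : ℕ → E) (m : ℕ) (i : ℕ) :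
    cjet (polyJ t₀ c m) t₀ i = if i < m then c i else 0 := by
  have hiD : iteratedDeriv i (polyJ t₀ c m) t₀
      = if i < m then (i.factorial : ℝ) • c i else 0 := by
    rw [show polyJ t₀ c m = fun t => ∑ l ∈ Finset.range m, (t - t₀) ^ l • c l from rfl]
    rw [iD_fsum (Finset.range m) (fun l t => (t - t₀) ^ l • c l)
      (fun l _ => ((contDiff_id.sub contDiff_const).pow l).smul contDiff_const) i t₀]
    have : ∀ l ∈ Finset.range m,
        iteratedDeriv i (fun t => (t - t₀) ^ l • c l) t₀
          = if i = l then (l.factorial : ℝ) • c l else 0 := by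
      intro l _
      rw [iD_smul_const (fun t => (t - t₀) ^ l)
        (by exact (contDiff_id.sub contDiff_const).pow l) (c l) i t₀, iD_monomial_self]
      split <;> simp
    rw [Finset.sum_congr rfl this, Finset.sum_ite_eq (Finset.range m) i
      (fun l => (l.factorial : ℝ) • c l)]
    simp only [Finset.mem_range]
  rw [cjet, hiD]
  split
  · rw [smul_smul, inv_mul_cancel₀ (Nat.cast_ne_zero.2 (Nat.factorial_ne_zero i)), one_smul]
  · rw [smul_zero]

end Aux3

section Aux4

variable {E : Type*} [NormedAddCommGroup E] [InnerProductSpace ℝ E]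

lemma cjet_zero_eq (u : ℝ → E) (t₀ : ℝ) : cjet u t₀ 0 = u t₀ := by
  simp [cjet]

lemma isJet_of_rootFn {L : ℝ → E →L[ℝ] E} {t₀ : ℝ} (hL : ContDiff ℝ (⊤ : ℕ∞) L)
    {k : ℕ} {u : ℝ → E} (hu : IsRootFn L t₀ k u) : IsJet L t₀ k (cjet u t₀) := by
  intro j hj
  have h := iD_eq_jetC (t₀ := t₀) hL hu.1 j
  rw [hu.2.2 j hj] at h
  have h2 := h.symm
  rcases smul_eq_zero.1 h2 with h3 | h3
  · exact absurd h3 (Nat.cast_ne_zero.2 (Nat.factorial_ne_zero j))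
  · exact h3

lemma rootFn_of_isJet {L : ℝ → E →L[ℝ] E} {t₀ : ℝ} (hL : ContDiff ℝ (⊤ : ℕ∞) L) {k : ℕ} (hk : 1 ≤ k)
    {c : ℕ → E} (hc : IsJet L t₀ k c) :
    IsRootFn L t₀ k (polyJ t₀ c k) ∧ polyJ t₀ c k t₀ = c 0 ∧
      ∀ n, iteratedDeriv n (fun t => L t (polyJ t₀ c k t)) t₀
        = (n.factorial : ℝ) • jetC L t₀ (fun i => if i < k then c i else 0) n := by
  have hsm := polyJ_contDiff t₀ c k
  have hjet : ∀ n, iteratedDeriv n (fun t => L t (polyJ t₀ c k t)) t₀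
      = (n.factorial : ℝ) • jetC L t₀ (fun i => if i < k then c i else 0) n := by
    intro n
    rw [iD_eq_jetC hL hsm n]
    rw [show cjet (polyJ t₀ c k) t₀ = fun i => if i < k then c i else 0 from
      funext (cjet_polyJ t₀ c k)]
  have htrunc : ∀ j < k, jetC L t₀ (fun i => if i < k then c i else 0) j = jetC L t₀ c j := by
    intro j hj
    exact jetC_congr (fun i hi => if_pos (by omega))
  refine ⟨⟨hsm, ?_, ?_⟩, polyJ_apply_self t₀ c hk, hjet⟩
  · have h0 := hjet 0
    rw [iteratedDeriv_zero] at h0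
    simp only [Nat.factorial_zero, Nat.cast_one, one_smul] at h0
    rw [htrunc 0 hk, hc 0 hk] at h0
    exact h0
  · intro j hj
    rw [hjet j, htrunc j hj, hc j hj, smul_zero]

lemma pairing_eval {L : ℝ → E →L[ℝ] E} {t₀ : ℝ} (hL : ContDiff ℝ (⊤ : ℕ∞) L)
    (hsym : ∀ t, ∀ x y : E, ⟪L t x, y⟫ = ⟪x, L t y⟫) {k : ℕ} {c d : ℕ → E}
    (hc : IsJet L t₀ k c) (hd : IsJet L t₀ k d) :
    ⟪jetC L t₀ c k, d 0⟫ = ⟪jetC L t₀ d k, c 0⟫ := by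
  have h := jetC_pairing_symm hL (t₀ := t₀) hsym k c d
  rw [Finset.sum_range_succ, Finset.sum_range_succ] at h
  have h1 : ∑ j ∈ Finset.range k, ⟪jetC L t₀ c j, d (k - j)⟫ = 0 :=
    Finset.sum_eq_zero fun j hj => by
      rw [hc j (Finset.mem_range.1 hj), inner_zero_left]
  have h2 : ∑ j ∈ Finset.range k, ⟪jetC L t₀ d j, c (k - j)⟫ = 0 :=
    Finset.sum_eq_zero fun j hj => by
      rw [hd j (Finset.mem_range.1 hj), inner_zero_left]
  rw [h1, h2, Nat.sub_self, zero_add, zero_add] at h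
  exact h

lemma jetC_smul (L : ℝ → E →L[ℝ] E) (t₀ : ℝ) (r : ℝ) (c : ℕ → E) (j : ℕ) :
    jetC L t₀ (fun i => r • c i) j = r • jetC L t₀ c j := by
  simp [jetC, Finset.smul_sum]

/-- Abstract surjectivity lemma for maps self-adjoint with respect to a reversal. -/
lemma surj_of_symm {V : Type*} [NormedAddCommGroup V] [InnerProductSpace ℝ V]
    [FiniteDimensional ℝ V] (T R : V →ₗ[ℝ] V) (hR : ∀ v, R (R v) = v)
    (hadj : ∀ a b, ⟪T a, b⟫ = ⟪a, R (T (R b))⟫)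
    (z : V) (hz : ∀ u, T u = 0 → ⟪z, R u⟫ = 0) : ∃ e, T e = z := by
  have hadj' : (R ∘ₗ T ∘ₗ R) = LinearMap.adjoint T := by
    apply (LinearMap.eq_adjoint_iff _ _).2
    intro a b
    simp only [LinearMap.comp_apply]
    rw [real_inner_comm, ← hadj b a]
    exact real_inner_comm _ _
  have h1 : (LinearMap.range T)ᗮ = LinearMap.ker (LinearMap.adjoint T) := by
    ext v
    simp only [Submodule.mem_orthogonal, LinearMap.mem_ker]
    constructor
    · intro h
      have hy : ∀ y, ⟪LinearMap.adjoint T v, y⟫ = 0 := by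
        intro y
        rw [LinearMap.adjoint_inner_left, real_inner_comm]
        exact h (T y) ⟨y, rfl⟩
      have := hy (LinearMap.adjoint T v)
      exact inner_self_eq_zero.1 this
    · intro h u hu
      obtain ⟨y, rfl⟩ := hu
      have hal := LinearMap.adjoint_inner_left T y v
      rw [real_inner_comm, ← hal, h, inner_zero_left]
  have hrange : LinearMap.range T = (LinearMap.ker (LinearMap.adjoint T))ᗮ := by
    rw [← h1, Submodule.orthogonal_orthogonal]
  have hz' : z ∈ (LinearMap.ker (LinearMap.adjoint T))ᗮ := by
    rw [Submodule.mem_orthogonal]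
    intro u hu
    rw [LinearMap.mem_ker, ← hadj'] at hu
    simp only [LinearMap.comp_apply] at hu
    have h2 : T (R u) = 0 := by
      have h3 := congrArg R hu
      rwa [hR, map_zero] at h3
    have h4 := hz (R u) h2
    rw [hR] at h4
    rw [real_inner_comm]
    exact h4
  rw [← hrange] at hz'
  exact hz'

end Aux4

section Aux5

variable {E : Type*} [NormedAddCommGroup E] [InnerProductSpace ℝ E]

lemma exists_corrector [FiniteDimensional ℝ E] {L : ℝ → E →L[ℝ] E} {t₀ : ℝ}
    (hL : ContDiff ℝ (⊤ : ℕ∞) L) (hsym : ∀ t, ∀ x y : E, ⟪L t x, y⟫ = ⟪x, L t y⟫)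
    {k : ℕ} (hk : 1 ≤ k) (x : E)
    (hx : ∀ c : ℕ → E, IsJet L t₀ k c → ⟪x, c 0⟫ = 0) :
    ∃ g : ℕ → E, g 0 = 0 ∧ (∀ j < k, jetC L t₀ g j = 0) ∧ jetC L t₀ g k = -x := by
  classical
  let V : Type _ := PiLp 2 (fun _ : Fin k => E)
  let ext : (Fin k → E) → (ℕ → E) := fun e i => if h : i < k then e ⟨i, h⟩ else 0
  have ext_add : ∀ (e f : Fin k → E) (i : ℕ), ext (e + f) i = ext e i + ext f i := by
    intro e f i
    simp only [ext]
    split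
    · rfl
    · rw [add_zero]
  have ext_smul : ∀ (r : ℝ) (e : Fin k → E) (i : ℕ), ext (r • e) i = r • ext e i := by
    intro r e i
    simp only [ext]
    split
    · rfl
    · rw [smul_zero]
  let T : V →ₗ[ℝ] V :=
    { toFun := fun e => (WithLp.toLp 2 (fun j : Fin k => jetC L t₀ (ext e) j.1) : V)
      map_add' := by
        intro a b
        ext j
        show jetC L t₀ (ext (a + b)) j.1 = jetC L t₀ (ext a) j.1 + jetC L t₀ (ext b) j.1
        rw [jetC_congr (fun i _ => ext_add a b i), ← jetC_add]
      map_smul' := by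
        intro r a
        ext j
        show jetC L t₀ (ext (r • a)) j.1 = r • jetC L t₀ (ext a) j.1
        rw [jetC_congr (fun i _ => ext_smul r a i), ← jetC_smul] }
  let R : V →ₗ[ℝ] V :=
    { toFun := fun e => (WithLp.toLp 2 (fun j : Fin k => e j.rev) : V)
      map_add' := fun a b => rfl
      map_smul' := fun r a => rfl }
  have hR : ∀ v, R (R v) = v := by
    intro v
    ext j
    show v j.rev.rev = v j
    rw [Fin.rev_rev]
  have hrevval : ∀ j : Fin k, (j.rev : ℕ) = k - 1 - j.1 := by
    intro j
    rw [Fin.val_rev]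
    omega
  have hTapp : ∀ (e : V) (j : Fin k), T e j = jetC L t₀ (ext e) j.1 := fun e j => rfl
  have hRapp : ∀ (e : V) (j : Fin k), R e j = e j.rev := fun e j => rfl
  have hadj : ∀ a b : V, ⟪T a, b⟫ = ⟪a, R (T (R b))⟫ := by
    intro a b
    rw [PiLp.inner_apply, PiLp.inner_apply]
    set c : ℕ → E := ext a with hc
    set d : ℕ → E := ext (R b) with hd
    have hbj : ∀ j : Fin k, b j = d (k - 1 - j.1) := by
      intro j
      have hlt : k - 1 - j.1 < k := by omega
      have : d (k - 1 - j.1) = (R b) ⟨k - 1 - j.1, hlt⟩ := by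
        simp only [hd, ext, dif_pos hlt]
      rw [this, hRapp]
      refine congrArg _ (Fin.ext ?_)
      rw [hrevval]
      show (j : ℕ) = k - 1 - (k - 1 - (j : ℕ))
      omega
    have haj : ∀ j : Fin k, a j = c j.1 := by
      intro j
      simp only [hc, ext, dif_pos j.2]
    have lhs_eq : ∑ j : Fin k, ⟪T a j, b j⟫
        = ∑ j ∈ Finset.range k, ⟪jetC L t₀ c j, d (k - 1 - j)⟫ := by
      rw [← Fin.sum_univ_eq_sum_range (fun j => ⟪jetC L t₀ c j, d (k - 1 - j)⟫) k]
      apply Finset.sum_congr rfl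
      intro j _
      rw [hTapp, hbj]
    have rhs_eq : ∑ j : Fin k, ⟪a j, R (T (R b)) j⟫
        = ∑ j ∈ Finset.range k, ⟪c j, jetC L t₀ d (k - 1 - j)⟫ := by
      rw [← Fin.sum_univ_eq_sum_range (fun j => ⟪c j, jetC L t₀ d (k - 1 - j)⟫) k]
      apply Finset.sum_congr rfl
      intro j _
      rw [haj, hRapp, hTapp, hrevval]
    rw [lhs_eq, rhs_eq]
    have hk1 : k - 1 + 1 = k := by omega
    calc ∑ j ∈ Finset.range k, ⟪jetC L t₀ c j, d (k - 1 - j)⟫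
        = ∑ j ∈ Finset.range (k - 1 + 1), ⟪jetC L t₀ c j, d (k - 1 - j)⟫ := by rw [hk1]
      _ = ∑ j ∈ Finset.range (k - 1 + 1), ⟪jetC L t₀ d j, c (k - 1 - j)⟫ :=
          jetC_pairing_symm hL hsym (k - 1) c d
      _ = ∑ j ∈ Finset.range k, ⟪jetC L t₀ d j, c (k - 1 - j)⟫ := by rw [hk1]
      _ = ∑ j ∈ Finset.range k, ⟪jetC L t₀ d (k - 1 - j), c (k - 1 - (k - 1 - j))⟫ := by
          rw [Finset.sum_range_reflect (fun j => ⟪jetC L t₀ d j, c (k - 1 - j)⟫) k]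
      _ = ∑ j ∈ Finset.range k, ⟪c j, jetC L t₀ d (k - 1 - j)⟫ := by
          apply Finset.sum_congr rfl
          intro j hj
          simp only [Finset.mem_range] at hj
          rw [show k - 1 - (k - 1 - j) = j from by omega]
          exact real_inner_comm _ _
  let z : V := (WithLp.toLp 2 (fun j : Fin k => if j.1 = k - 1 then -x else 0) : V)
  have hz : ∀ u, T u = 0 → ⟪z, R u⟫ = 0 := by
    intro u hu
    have hjet : IsJet L t₀ k (ext u) := by
      intro j hj
      have h5 : T u ⟨j, hj⟩ = (0 : V) ⟨j, hj⟩ := by rw [hu]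
      exact h5
    have h0 := hx (ext u) hjet
    have hext0 : ext u 0 = u ⟨0, by omega⟩ := by
      simp only [ext]
      split
      · rfl
      · next h => exact absurd (by omega : (0:ℕ) < k) h
    rw [PiLp.inner_apply]
    rw [Finset.sum_eq_single (⟨k - 1, by omega⟩ : Fin k)]
    · have hz1 : z ⟨k - 1, by omega⟩ = -x := if_pos rfl
      have hr1 : R u ⟨k - 1, by omega⟩ = u ⟨0, by omega⟩ := by
        rw [hRapp]
        refine congrArg _ (Fin.ext ?_)
        rw [hrevval]
        show k - 1 - (k - 1) = 0
        omega
      rw [hz1, hr1, inner_neg_left, ← hext0, h0, neg_zero]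
    · intro j _ hj
      have hz0 : z j = 0 := by
        apply if_neg
        intro hh
        exact hj (by ext; exact hh)
      rw [hz0, inner_zero_left]
    · intro h
      exact absurd (Finset.mem_univ _) h
  obtain ⟨e, he⟩ := surj_of_symm T R hR hadj z hz
  let g : ℕ → E := fun i => if i = 0 then 0 else ext e (i - 1)
  have hg0 : g 0 = 0 := rfl
  have hshift : ∀ j, 1 ≤ j → jetC L t₀ g j = jetC L t₀ (ext e) (j - 1) := by
    intro j hj
    rw [jetC, Finset.sum_range_succ'
      (fun i => jetA L t₀ (j - i) (g i)) j]
    have hF0 : jetA L t₀ (j - 0) (g 0) = 0 := by rw [hg0, map_zero]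
    rw [hF0, add_zero]
    have hterm : ∀ i ∈ Finset.range j,
        jetA L t₀ (j - (i + 1)) (g (i + 1)) = jetA L t₀ ((j - 1) - i) (ext e i) := by
      intro i _
      rw [show j - (i + 1) = (j - 1) - i from by omega,
        show g (i + 1) = ext e i from by simp only [g, if_neg (Nat.succ_ne_zero i), Nat.add_sub_cancel]]
    rw [Finset.sum_congr rfl hterm, jetC, show j - 1 + 1 = j from by omega]
  have hTe : ∀ j (hj : j < k), jetC L t₀ (ext e) j = z ⟨j, hj⟩ := by
    intro j hj
    have h5 : T e ⟨j, hj⟩ = z ⟨j, hj⟩ := by rw [he]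
    exact h5
  refine ⟨g, hg0, ?_, ?_⟩
  · intro j hj
    rcases Nat.eq_zero_or_pos j with rfl | hj1
    · rw [jetC, Finset.sum_range_one, hg0, map_zero]
    · rw [hshift j hj1, hTe (j - 1) (by omega)]
      show (if j - 1 = k - 1 then -x else 0) = 0
      rw [if_neg (by omega : ¬ (j - 1 = k - 1))]
  · rw [hshift k hk, hTe (k - 1) (by omega)]
    show (if k - 1 = k - 1 then -x else 0) = -x
    rw [if_pos rfl]

end Aux5

/-- **`W_{k+1}` is the kernel of `B_k`.** For any smooth curve of symmetric operators with a
unique (isolated) degeneracy instant at `t₀`, for every `k ≥ 1` the space `W_{k+1}` equals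
the kernel of the partial signature form `B_k` on `W_k`. -/
theorem Wk_succ_eq_ker_Bk
    {E : Type*} [NormedAddCommGroup E] [InnerProductSpace ℝ E] [FiniteDimensional ℝ E]
    (L : ℝ → E →L[ℝ] E) (t₀ : ℝ)
    (hL : ContDiff ℝ (⊤ : ℕ∞) L)
    (hsym : ∀ t, ∀ x y : E, ⟪L t x, y⟫ = ⟪x, L t y⟫)
    (hisol : ∃ δ > 0, ∀ t, t ≠ t₀ → |t - t₀| < δ → Function.Injective ⇑(L t)) :
    ∀ k : ℕ, 1 ≤ k →
      Wk L t₀ (k + 1)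
        = {w ∈ Wk L t₀ k | ∀ u : ℝ → E, IsRootFn L t₀ k u →
            ⟪iteratedDeriv k (fun t => L t (u t)) t₀, w⟫ = 0} := by
  intro k hk
  ext w
  simp only [Set.mem_sep_iff, Wk, Set.mem_setOf_eq]
  constructor
  · rintro ⟨v, hv, rfl⟩
    have hd : IsJet L t₀ (k + 1) (cjet v t₀) := isJet_of_rootFn hL hv
    constructor
    · exact ⟨v, ⟨hv.1, hv.2.1, fun j hj => hv.2.2 j (by omega)⟩, rfl⟩
    · intro u hu
      have hc : IsJet L t₀ k (cjet u t₀) := isJet_of_rootFn hL hu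
      have hdk : IsJet L t₀ k (cjet v t₀) := fun j hj => hd j (by omega)
      rw [iD_eq_jetC (t₀ := t₀) hL hu.1 k, real_inner_smul_left]
      rw [show v t₀ = cjet v t₀ 0 from (cjet_zero_eq v t₀).symm]
      rw [pairing_eval hL hsym hc hdk, hd k (by omega), inner_zero_left, mul_zero]
  · rintro ⟨⟨v, hv, rfl⟩, H⟩
    have hd : IsJet L t₀ k (cjet v t₀) := isJet_of_rootFn hL hv
    have hx : ∀ c : ℕ → E, IsJet L t₀ k c → ⟪jetC L t₀ (cjet v t₀) k, c 0⟫ = 0 := by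
      intro c hc
      have hc' : IsJet L t₀ k (fun i => if i < k then c i else 0) := by
        intro j hj
        rw [jetC_congr (fun i hi =>
          (if_pos (by omega) : (if i < k then c i else 0) = c i))]
        exact hc j hj
      obtain ⟨hroot, hval, hiD⟩ := rootFn_of_isJet hL hk hc
      have hH := H _ hroot
      rw [hiD k, real_inner_smul_left] at hH
      have hfac : ((k.factorial : ℝ)) ≠ 0 := Nat.cast_ne_zero.2 (Nat.factorial_ne_zero k)
      have h1 : ⟪jetC L t₀ (fun i => if i < k then c i else 0) k, v t₀⟫ = 0 := by
        rcases mul_eq_zero.1 hH with h | h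
        · exact absurd h hfac
        · exact h
      have hpair := pairing_eval hL hsym hc' hd
      rw [cjet_zero_eq v t₀, h1] at hpair
      rw [show (if 0 < k then c 0 else 0) = c 0 from if_pos hk] at hpair
      exact hpair.symm
    obtain ⟨g, hg0, hgj, hgk⟩ :=
      exists_corrector hL hsym hk (jetC L t₀ (cjet v t₀) k) hx
    have hd' : IsJet L t₀ (k + 1) (fun i => cjet v t₀ i + g i) := by
      intro j hj
      rw [jetC_add]
      rcases Nat.lt_or_ge j k with h | h
      · rw [hd j h, hgj j h, add_zero]
      · have hjk : j = k := by omega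
        subst hjk
        rw [hgk]
        exact add_neg_cancel _
    obtain ⟨hroot', hval', _⟩ := rootFn_of_isJet hL (by omega : 1 ≤ k + 1) hd'
    refine ⟨polyJ t₀ (fun i => cjet v t₀ i + g i) (k + 1), hroot', ?_⟩
    rw [hval', hg0, add_zero, cjet_zero_eq]
end
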